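/- arXiv:2403.05483 — 11 statements merged into one kernel-verified Lean document; each statement's English description precedes it below -/
import Mathlib

section
/- If H is a finite index subgroup of a group G and H is subgroup separable, then G is subgroup separable. -/
open Pointwise


def SeparableSubgroup {G : Type*} [Group G] (H : Subgroup G) : Prop :=
  ∃ S : Set (Subgroup G), (∀ K ∈ S, K.FiniteIndex) ∧ H = sInf S

def IsLERF (G : Type*) [Group G] : Prop :=
  ∀ H : Subgroup G, H.FG → SeparableSubgroup H

theorem stmt_1 (G : Type*) [Group G] (H : Subgroup G) (hfi : H.FiniteIndex)
    (hH : IsLERF H) : IsLERF G := by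
  intro K hK
  refine ⟨{L | K ≤ L ∧ L.FiniteIndex}, fun L hL => hL.2, le_antisymm
    (le_sInf fun L hL => hL.1) ?_⟩
  intro x hx
  by_contra hxK
  -- K ⊓ H is f.g. as a subgroup of H
  haveI hKfg : Group.FG K := (Group.fg_iff_subgroup_fg K).mpr hK
  haveI : Group.FG ↥(H.subgroupOf K) := Subgroup.fg_of_index_ne_zero _
  have hDfg : (K.subgroupOf H).FG := by
    rw [← Group.fg_iff_subgroup_fg]
    have h1 : H.subgroupOf K = (H ⊓ K).subgroupOf K := by
      ext y; simp [Subgroup.mem_subgroupOf, y.2]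
    have h2 : K.subgroupOf H = (H ⊓ K).subgroupOf H := by
      ext y; simp [Subgroup.mem_subgroupOf, y.2]
    rw [h2]
    have e : ↥(H.subgroupOf K) ≃* ↥((H ⊓ K).subgroupOf H) := by
      rw [h1]
      exact (Subgroup.subgroupOfEquivOfLe inf_le_right).trans
        (Subgroup.subgroupOfEquivOfLe inf_le_left).symm
    exact Group.fg_of_surjective (G := ↥(H.subgroupOf K)) (f := e.toMonoidHom)
      e.surjective
  obtain ⟨S', hS'fi, hS'eq⟩ := hH (K.subgroupOf H) hDfg
  -- find a finite-index subgroup M ⊇ K with x ∉ M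
  have key : ∃ M : Subgroup G, K ≤ M ∧ M.FiniteIndex ∧ x ∉ M := by
    by_cases hxKH : ∃ k ∈ K, ∃ h ∈ H, x = k * h
    · obtain ⟨k, hk, h, hh, rfl⟩ := hxKH
      have hhK : h ∉ K := fun hc => hxK (K.mul_mem hk hc)
      have hhD : (⟨h, hh⟩ : H) ∉ K.subgroupOf H := by
        simpa [Subgroup.mem_subgroupOf] using hhK
      rw [hS'eq] at hhD
      rw [Subgroup.mem_sInf] at hhD
      push_neg at hhD
      obtain ⟨L, hLS, hhL⟩ := hhD
      haveI : L.FiniteIndex := hS'fi L hLS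
      set L₀ : Subgroup G := L.map H.subtype with hL₀
      haveI : L₀.FiniteIndex := by
        constructor
        rw [hL₀, Subgroup.index_map_subtype]
        exact Nat.mul_ne_zero Subgroup.FiniteIndex.index_ne_zero
          Subgroup.FiniteIndex.index_ne_zero
      haveI : L₀.normalCore.Normal := Subgroup.normalCore_normal L₀
      refine ⟨K ⊔ L₀.normalCore, le_sup_left,
        Subgroup.finiteIndex_of_le le_sup_right, ?_⟩
      intro hmem
      have : k * h ∈ ((K ⊔ L₀.normalCore : Subgroup G) : Set G) := hmem
      rw [Subgroup.mul_normal] at this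
      obtain ⟨k', hk', n, hn, heq⟩ := this
      have hnL₀ : n ∈ L₀ := L₀.normalCore_le hn
      have hnH : n ∈ H := by
        obtain ⟨m, _, rfl⟩ := hnL₀
        exact m.2
      -- c := k⁻¹ * k' lies in K ⊓ H
      have hcK : k⁻¹ * k' ∈ K := K.mul_mem (K.inv_mem hk) hk'
      have heq' : k' * n = k * h := heq
      have hch : h = (k⁻¹ * k') * n := by
        rw [mul_assoc, heq', ← mul_assoc, inv_mul_cancel, one_mul]
      have hcH : k⁻¹ * k' ∈ H := by
        have : k⁻¹ * k' = h * n⁻¹ := by rw [hch]; group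
        rw [this]; exact H.mul_mem hh (H.inv_mem hnH)
      have hcD : (⟨k⁻¹ * k', hcH⟩ : H) ∈ K.subgroupOf H := by
        simpa [Subgroup.mem_subgroupOf] using hcK
      have hcL : (⟨k⁻¹ * k', hcH⟩ : H) ∈ L := by
        have := hS'eq ▸ hcD
        exact (Subgroup.mem_sInf.mp this) L hLS
      obtain ⟨m, hmL, hmn⟩ := hnL₀
      have : (⟨h, hh⟩ : H) = ⟨k⁻¹ * k', hcH⟩ * m := by
        ext
        simp only [Subgroup.coe_mul]
        rw [hch, ← hmn]
        rfl
      rw [this] at hhL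
      exact hhL (L.mul_mem hcL hmL)
    · haveI : H.normalCore.Normal := Subgroup.normalCore_normal H
      refine ⟨K ⊔ H.normalCore, le_sup_left,
        Subgroup.finiteIndex_of_le le_sup_right, ?_⟩
      intro hmem
      have : x ∈ ((K ⊔ H.normalCore : Subgroup G) : Set G) := hmem
      rw [Subgroup.mul_normal] at this
      obtain ⟨k, hk, n, hn, heq⟩ := this
      exact hxKH ⟨k, hk, n, H.normalCore_le hn, heq.symm⟩
  obtain ⟨M, hKM, hMfi, hxM⟩ := key
  exact hxM ((Subgroup.mem_sInf.mp hx) M ⟨hKM, hMfi⟩)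
end

section
/- Every finitely generated abelian group is ERF. -/
open DirectSum


/-- ERF: every subgroup is an intersection of finite index subgroups. -/
def IsERF (G : Type*) [Group G] : Prop :=
  ∀ H : Subgroup G, SeparableSubgroup H

/-- Residual finiteness for `(Fin n →₀ ℤ) × ⨁ ZMod (p i ^ e i)`. -/
lemma resfin_prod {n : ℕ} {ι : Type} [Fintype ι] (p e : ι → ℕ) (hp : ∀ i, Nat.Prime (p i))
    (x : (Fin n →₀ ℤ) × ⨁ i : ι, ZMod (p i ^ e i)) (hx : x ≠ 0) :
    ∃ K : AddSubgroup ((Fin n →₀ ℤ) × ⨁ i : ι, ZMod (p i ^ e i)),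
      K.FiniteIndex ∧ x ∉ K := by
  classical
  haveI : ∀ i, NeZero (p i ^ e i) := fun i => ⟨pow_ne_zero _ (hp i).ne_zero⟩
  haveI : Finite (⨁ i : ι, ZMod (p i ^ e i)) :=
    Finite.of_equiv (∀ i, ZMod (p i ^ e i)) DFinsupp.equivFunOnFintype.symm
  by_cases h2 : x.2 ≠ 0
  · refine ⟨(AddMonoidHom.snd (Fin n →₀ ℤ) (⨁ i : ι, ZMod (p i ^ e i))).ker, ?_, ?_⟩
    · infer_instance
    · intro hx2
      exact h2 (AddMonoidHom.mem_ker.mp hx2)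
  · push_neg at h2
    have h1 : x.1 ≠ 0 := by
      intro h1; exact hx (Prod.ext h1 h2)
    obtain ⟨i, hi⟩ : ∃ i, x.1 i ≠ 0 := by
      by_contra hc; push_neg at hc
      exact h1 (Finsupp.ext hc)
    set m : ℤ := x.1 i with hm
    set N : ℕ := m.natAbs + 1 with hN
    set φ : ((Fin n →₀ ℤ) × ⨁ i : ι, ZMod (p i ^ e i)) →+ ZMod N :=
      (Int.castAddHom (ZMod N)).comp ((Finsupp.applyAddHom i).comp
        (AddMonoidHom.fst (Fin n →₀ ℤ) (⨁ i : ι, ZMod (p i ^ e i)))) with hφ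
    refine ⟨φ.ker, inferInstance, ?_⟩
    rw [AddMonoidHom.mem_ker]
    have : φ x = (m : ZMod N) := rfl
    rw [this]
    intro hzero
    rw [ZMod.intCast_zmod_eq_zero_iff_dvd] at hzero
    have := Int.le_of_dvd (abs_pos.mpr hi) ((dvd_abs _ _).mpr hzero)
    rw [Int.abs_eq_natAbs] at this
    omega

/-- Residual finiteness for finitely generated additive commutative groups. -/
lemma resfin_add {A : Type*} [AddCommGroup A] [hA : AddGroup.FG A] {a : A} (ha : a ≠ 0) :
    ∃ K : AddSubgroup A, K.FiniteIndex ∧ a ∉ K := by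
  obtain ⟨n, ι, fι, p, hp, e, ⟨f⟩⟩ := AddCommGroup.equiv_free_prod_directSum_zmod A
  have hx : f a ≠ 0 := by
    intro hfa
    exact ha (by simpa using congrArg f.symm hfa)
  obtain ⟨K0, hK0, haK0⟩ := resfin_prod p e hp (f a) hx
  refine ⟨K0.comap f.toAddMonoidHom, ?_, ?_⟩
  · refine ⟨?_⟩
    rw [AddSubgroup.index_comap_of_surjective _ f.surjective]
    exact hK0.index_ne_zero
  · simpa [AddSubgroup.mem_comap] using haK0

/-- Residual finiteness for finitely generated commutative groups. -/
lemma resfin_mul {G : Type*} [CommGroup G] (h : Group.FG G) {g : G} (hg : g ≠ 1) :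
    ∃ K : Subgroup G, K.FiniteIndex ∧ g ∉ K := by
  haveI : AddGroup.FG (Additive G) := GroupFG.iff_add_fg.1 h
  obtain ⟨K, hK, hgK⟩ := resfin_add (A := Additive G) (a := Additive.ofMul g) hg
  refine ⟨AddSubgroup.toSubgroup K, ⟨?_⟩, hgK⟩
  exact (AddSubgroup.index_toSubgroup K).trans_ne hK.index_ne_zero

theorem stmt_7 (G : Type*) [CommGroup G] (h : Group.FG G) : IsERF G := by
  intro H
  refine ⟨{K | H ≤ K ∧ K.FiniteIndex}, fun K hK => hK.2, ?_⟩
  refine le_antisymm (le_sInf fun K hK => hK.1) ?_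
  intro g hg
  by_contra hgH
  haveI := h
  haveI : Group.FG (G ⧸ H) := Group.fg_of_surjective (QuotientGroup.mk'_surjective H)
  have hq : (QuotientGroup.mk' H) g ≠ 1 := by
    simpa [QuotientGroup.mk'_apply, QuotientGroup.eq_one_iff] using hgH
  obtain ⟨K, hK, hgK⟩ := resfin_mul (G := G ⧸ H) ‹Group.FG (G ⧸ H)› hq
  have hle : H ≤ K.comap (QuotientGroup.mk' H) := by
    intro x hx
    have : (QuotientGroup.mk' H) x = 1 := by
      simpa [QuotientGroup.mk'_apply, QuotientGroup.eq_one_iff] using hx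
    rw [Subgroup.mem_comap, this]
    exact K.one_mem
  have hfi : (K.comap (QuotientGroup.mk' H)).FiniteIndex := by
    refine ⟨?_⟩
    rw [Subgroup.index_comap_of_surjective _ (QuotientGroup.mk'_surjective H)]
    exact hK.index_ne_zero
  exact hgK (Subgroup.mem_sInf.1 hg _ ⟨hle, hfi⟩)
end

section
/- The direct product F₂ × F₂ of two free groups of rank two is not coherent. -/
/-- A group is finitely presented. -/
def FinitelyPresentedGroup (G : Type*) [Group G] : Prop :=
  ∃ (n : ℕ) (rels : Finset (FreeGroup (Fin n))),
    Nonempty (PresentedGroup (rels : Set (FreeGroup (Fin n))) ≃* G)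

/-- A group is coherent if every finitely generated subgroup is finitely
presented. -/
def CoherentGroup (G : Type*) [Group G] : Prop :=
  ∀ H : Subgroup G, H.FG → FinitelyPresentedGroup H

namespace Stallings

open FreeGroup SemidirectProduct Subgroup
open scoped commutatorElement Fin.NatCast

abbrev F2 := FreeGroup (Fin 2)
abbrev F3 := FreeGroup (Fin 3)
abbrev FZ := FreeGroup ℤ

/-- the shift automorphism of the free group on ℤ -/
def shift : MulAut FZ := freeGroupCongr (Equiv.addRight (1:ℤ))

@[simp] lemma shift_of (i : ℤ) : shift (of i) = of (i+1) := rfl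

@[simp] lemma shift_inv_of (i : ℤ) : shift⁻¹ (of i) = of (i-1) := by
  have : shift (of (i-1)) = of i := by rw [shift_of]; ring_nf
  rw [← this, MulAut.inv_def, MulEquiv.symm_apply_apply]

@[simp] lemma shift_zpow_of (k i : ℤ) : (shift^k) (of i) = of (i+k) := by
  induction k using Int.induction_on generalizing i with
  | zero => simp
  | succ n ih => rw [zpow_add, zpow_one, MulAut.mul_apply, shift_of, ih]; ring_nf
  | pred n ih =>
      rw [sub_eq_add_neg, zpow_add, MulAut.mul_apply, zpow_neg_one, shift_inv_of, ih]; ring_nf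

/-- the action of F2 on FZ : both generators act by the shift -/
def ψ : F2 →* MulAut FZ := FreeGroup.lift (fun _ => shift)

@[simp] lemma ψ_of (j : Fin 2) : ψ (of j) = shift := lift_apply_of

/-- The model group for Stallings' kernel. -/
abbrev M := FZ ⋊[ψ] F2


@[simp] lemma pure_eq_of {α : Type*} (x : α) : (pure x : FreeGroup α) = of x := rfl

/-- Extend a generator-level compatibility to all of the free group acting. -/
lemma compat_free {N H β : Type*} [Group N] [Group H] (φ : FreeGroup β →* MulAut N)
    (f₁ : N →* H) (f₂ : FreeGroup β →* H)
    (h : ∀ b n, f₁ (φ (of b) n) = f₂ (of b) * f₁ n * (f₂ (of b))⁻¹) :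
    ∀ g, f₁.comp (φ g).toMonoidHom = (MulAut.conj (f₂ g)).toMonoidHom.comp f₁ := by
  have key : ∀ g n, f₁ (φ g n) = f₂ g * f₁ n * (f₂ g)⁻¹ := by
    intro g
    induction g with
    | C1 => intro n; simp
    | of x => exact h x
    | inv_of x ih =>
        intro n
        have h3 := ih ((φ (of x)).symm n)
        rw [MulEquiv.apply_symm_apply] at h3
        rw [_root_.map_inv, _root_.map_inv, MulAut.inv_def, h3]
        group
    | mul x y ihx ihy =>
        intro n
        rw [_root_.map_mul, _root_.map_mul, MulAut.mul_apply, ihx, ihy]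
        group
  intro g
  ext n
  simpa using key g n

/-- the main homomorphism from the free group on three letters to F₂ × F₂ -/
def pi' : F3 →* F2 × F2 :=
  FreeGroup.lift ![((of 0, (of 0)⁻¹) : F2 × F2), (of 1, (of 0)⁻¹), (1, of 0 * (of 1)⁻¹)]

/-- the comparison map to the model -/
def alpha : F3 →* M := FreeGroup.lift ![inr (of 0), inr (of 1), inl (of 0)]

def beta1 : FZ →* F2 × F2 :=
  FreeGroup.lift (fun i => ((1 : F2), (of 0)^(-i) * (of 0 * (of 1)⁻¹) * (of 0)^i))

def beta2 : F2 →* F2 × F2 :=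
  FreeGroup.lift ![((of 0, (of 0)⁻¹) : F2 × F2), (of 1, (of 0)⁻¹)]

lemma beta_compat : ∀ g, beta1.comp ((ψ g).toMonoidHom) =
    (MulAut.conj (beta2 g)).toMonoidHom.comp beta1 := by
  apply compat_free
  intro b n
  induction n using FreeGroup.induction_on with
  | C1 => simp
  | of i =>
      fin_cases b <;> refine Prod.ext ?_ ?_ <;>
        simp [beta1, beta2, Prod.mul_def] <;> group
  | inv_of i ih => rw [_root_.map_inv, _root_.map_inv, _root_.map_inv, ih]; group
  | mul u v ihu ihv => rw [_root_.map_mul, _root_.map_mul, _root_.map_mul, ihu, ihv]; group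

def beta : M →* F2 × F2 := SemidirectProduct.lift beta1 beta2 beta_compat

lemma pi'_eq : pi' = beta.comp alpha := by
  apply FreeGroup.ext_hom
  intro a
  fin_cases a <;>
    simp [pi', alpha, beta, beta1, beta2]


def delta : F2 →* M := FreeGroup.lift ![inr (of 0)⁻¹, inl (of 0)⁻¹ * inr (of 0)⁻¹]

lemma delta_comp_snd_beta1 : delta.comp ((MonoidHom.snd F2 F2).comp beta1) = inl := by
  apply FreeGroup.ext_hom
  intro i
  have h0 : delta (of 0) = inr ((of 0 : F2))⁻¹ := by simp [delta]
  have h1 : delta (of 1) = inl ((of 0 : FZ))⁻¹ * inr ((of 0 : F2))⁻¹ := by simp [delta]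
  have key : (inl (of i) : M) = inr ((of 0 : F2)^i) * inl ((of 0 : FZ)) * (inr ((of 0 : F2)^i))⁻¹ := by
    rw [← _root_.map_inv, ← inl_aut]
    congr 1
    rw [_root_.map_zpow, ψ_of]
    simp
  simp only [MonoidHom.comp_apply, beta1, lift_apply_of]
  show delta ((of 0 : F2)^(-i) * (of 0 * (of 1)⁻¹) * (of 0)^i) = (inl (of i) : M)
  rw [_root_.map_mul, _root_.map_mul, _root_.map_zpow, _root_.map_zpow, _root_.map_mul,
    _root_.map_inv, h0, h1, key]
  simp only [mul_inv_rev, inv_inv, ← _root_.map_zpow, ← _root_.map_inv, ← _root_.map_mul,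
    inv_zpow, zpow_neg, mul_assoc]
  rw [← mul_assoc (inr ((of 0 : F2))⁻¹), ← _root_.map_mul, inv_mul_cancel, _root_.map_one, one_mul]

lemma beta_fst (m : M) : (beta m).1 = m.right := by
  have h1 : (MonoidHom.fst F2 F2).comp (beta.comp inl) = 1 := by
    apply FreeGroup.ext_hom; intro i; simp [beta, beta1]
  have h2 : (MonoidHom.fst F2 F2).comp (beta.comp inr) = MonoidHom.id F2 := by
    apply FreeGroup.ext_hom; intro j; fin_cases j <;> simp [beta, beta2]
  conv_lhs => rw [← inl_left_mul_inr_right m]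
  rw [_root_.map_mul, Prod.fst_mul]
  have e1 : (beta (inl m.left)).1 = (1 : F2) := DFunLike.congr_fun h1 m.left
  have e2 : (beta (inr m.right)).1 = m.right := DFunLike.congr_fun h2 m.right
  rw [e1, e2, one_mul]

lemma beta_injective : Function.Injective beta := by
  rw [injective_iff_map_eq_one]
  intro m hm
  have hr : m.right = 1 := by rw [← beta_fst m, hm]; rfl
  have hm' : m = inl m.left := by
    conv_lhs => rw [← inl_left_mul_inr_right m]
    rw [hr, _root_.map_one, mul_one]
  rw [hm'] at hm ⊢
  have hsnd : (MonoidHom.snd F2 F2) (beta1 m.left) = 1 := by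
    have : beta1 m.left = 1 := by
      have : beta (inl m.left) = beta1 m.left := by simp [beta]
      rw [← this, hm]
    rw [this]; rfl
  have key := DFunLike.congr_fun delta_comp_snd_beta1 m.left
  rw [MonoidHom.comp_apply, MonoidHom.comp_apply, hsnd, _root_.map_one] at key
  exact key.symm


/-- conjugated generators -/
def cw (k : ℤ) : F3 := (of 0)^k * of 2 * (of 0)^(-k)

/-- the relations -/
def rel (k : ℤ) : F3 := ⁅((of 0 : F3))⁻¹ * of 1, cw k⁆

def R : Set F3 := Set.range rel

abbrev Q := F3 ⧸ Subgroup.normalClosure R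

def mkQ : F3 →* Q := QuotientGroup.mk' _

lemma mkQ_rel (k : ℤ) : mkQ (rel k) = 1 := by
  rw [← MonoidHom.mem_ker, mkQ, QuotientGroup.ker_mk']
  exact Subgroup.subset_normalClosure ⟨k, rfl⟩

lemma mkQ_conj_cw (k : ℤ) (j : Fin 2) : mkQ (of j) * mkQ (cw k) * (mkQ (of j))⁻¹ = mkQ (cw (k+1)) := by
  have hx : (of 0 : F3) * cw k * (of 0)⁻¹ = cw (k+1) := by
    simp only [cw]; group
  have hx' : mkQ (of 0) * mkQ (cw k) * (mkQ (of 0))⁻¹ = mkQ (cw (k+1)) := by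
    rw [← _root_.map_inv, ← _root_.map_mul, ← _root_.map_mul, hx]
  fin_cases j
  · show mkQ ((of 0 : F3)) * mkQ (cw k) * (mkQ ((of 0 : F3)))⁻¹ = mkQ (cw (k+1))
    exact hx'
  · show mkQ ((of 1 : F3)) * mkQ (cw k) * (mkQ ((of 1 : F3)))⁻¹ = mkQ (cw (k+1))
    have hc : mkQ ((of 0)⁻¹ * of 1) * mkQ (cw k) = mkQ (cw k) * mkQ ((of 0)⁻¹ * of 1) := by
      rw [← commutatorElement_eq_one_iff_mul_comm, ← map_commutatorElement]
      have := mkQ_rel k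
      simp only [rel] at this
      exact this
    have key : mkQ ((of 1 : F3)) = mkQ (of 0) * mkQ ((of 0)⁻¹ * of 1) := by
      rw [_root_.map_mul, _root_.map_inv]; group
    rw [← hx', key]
    have : mkQ ((of 0)⁻¹ * of 1) * mkQ (cw k) * (mkQ ((of 0)⁻¹ * of 1))⁻¹ = mkQ (cw k) := by
      rw [hc, mul_inv_cancel_right]
    calc mkQ (of 0) * mkQ ((of 0)⁻¹ * of 1) * mkQ (cw k) * (mkQ (of 0) * mkQ ((of 0)⁻¹ * of 1))⁻¹
        = mkQ (of 0) * (mkQ ((of 0)⁻¹ * of 1) * mkQ (cw k) * (mkQ ((of 0)⁻¹ * of 1))⁻¹) * (mkQ (of 0))⁻¹ := by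
          group
      _ = mkQ (of 0) * mkQ (cw k) * (mkQ (of 0))⁻¹ := by rw [this]

def s1 : FZ →* Q := FreeGroup.lift (fun i => mkQ (cw i))

def s2 : F2 →* Q := FreeGroup.lift ![mkQ (of 0), mkQ (of 1)]

lemma st_compat : ∀ g, s1.comp ((ψ g).toMonoidHom) =
    (MulAut.conj (s2 g)).toMonoidHom.comp s1 := by
  apply compat_free
  intro b n
  induction n using FreeGroup.induction_on with
  | C1 => simp
  | of i =>
      have hb : s2 (of b) = mkQ (of b) := by
        fin_cases b <;> simp [s2]
      simp only [pure_eq_of, ψ_of, shift_of, s1, lift_apply_of, hb]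
      exact (mkQ_conj_cw i b).symm
  | inv_of i ih => rw [_root_.map_inv, _root_.map_inv, _root_.map_inv, ih]; group
  | mul u v ihu ihv => rw [_root_.map_mul, _root_.map_mul, _root_.map_mul, ihu, ihv]; group

def t : M →* Q := SemidirectProduct.lift s1 s2 st_compat

lemma t_alpha : t.comp alpha = mkQ := by
  apply FreeGroup.ext_hom
  intro a
  fin_cases a
  · show t (alpha (of 0)) = mkQ (of 0)
    simp [alpha, t, s2]
  · show t (alpha (of 1)) = mkQ (of 1)
    simp [alpha, t, s2]
  · show t (alpha (of 2)) = mkQ (of 2)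
    simp only [alpha, lift_apply_of, Matrix.cons_val_two, Matrix.tail_cons, Matrix.head_cons, t,
      SemidirectProduct.lift_inl, s1, lift_apply_of]
    have : cw 0 = of 2 := by simp [cw]
    rw [this]

lemma ker_pi_le : pi'.ker ≤ Subgroup.normalClosure R := by
  intro w hw
  have hαw : alpha w = 1 := by
    apply beta_injective
    rw [_root_.map_one, ← MonoidHom.comp_apply, ← pi'_eq]
    exact hw
  have : mkQ w = 1 := by
    rw [← t_alpha, MonoidHom.comp_apply, hαw, _root_.map_one]
  exact (QuotientGroup.eq_one_iff w).mp this

lemma rel_mem_ker (k : ℤ) : rel k ∈ pi'.ker := by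
  rw [MonoidHom.mem_ker]
  simp only [rel]
  rw [map_commutatorElement, commutatorElement_eq_one_iff_mul_comm]
  have hsnd : (pi' ((of 0)⁻¹ * of 1)).2 = 1 := by
    have e : ((MonoidHom.snd F2 F2).comp pi') ((of 0)⁻¹ * of 1) = (pi' ((of 0)⁻¹ * of 1)).2 := rfl
    rw [← e, _root_.map_mul, _root_.map_inv]
    have e0 : ((MonoidHom.snd F2 F2).comp pi') (of 0) = (of 0 : F2)⁻¹ := by simp [pi']
    have e1 : ((MonoidHom.snd F2 F2).comp pi') (of 1) = (of 0 : F2)⁻¹ := by simp [pi']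
    rw [e0, e1]; group
  have hfst : (pi' (cw k)).1 = 1 := by
    have e : ((MonoidHom.fst F2 F2).comp pi') (cw k) = (pi' (cw k)).1 := rfl
    rw [← e, cw, _root_.map_mul, _root_.map_mul, _root_.map_zpow, _root_.map_zpow]
    have e0 : ((MonoidHom.fst F2 F2).comp pi') (of 0) = (of 0 : F2) := by simp [pi']
    have e2 : ((MonoidHom.fst F2 F2).comp pi') (of 2) = (1 : F2) := by simp [pi']
    rw [e0, e2]; group
  refine Prod.ext ?_ ?_
  · rw [Prod.fst_mul, Prod.fst_mul, hfst, mul_one, one_mul]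
  · rw [Prod.snd_mul, Prod.snd_mul, hsnd, mul_one, one_mul]


/-- B.H. Neumann style lemma: a finitely presented group has finitely normally
generated kernel for any surjection from a finitely generated free group. -/
lemma neumann {H : Type*} [Group H] (hfp : FinitelyPresentedGroup H)
    (π : FreeGroup (Fin 3) →* H) (hsur : Function.Surjective π) :
    ∃ S : Set (FreeGroup (Fin 3)), S.Finite ∧ S ⊆ π.ker ∧
      π.ker ≤ Subgroup.normalClosure S := by
  classical
  obtain ⟨n, rels, ⟨e⟩⟩ := hfp
  set ρ : FreeGroup (Fin n) →* H :=
    e.toMonoidHom.comp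
      (QuotientGroup.mk' (Subgroup.normalClosure (rels : Set (FreeGroup (Fin n))))) with hρ
  have hρker : ρ.ker = Subgroup.normalClosure (rels : Set (FreeGroup (Fin n))) := by
    ext w
    simp only [hρ, MonoidHom.mem_ker, MonoidHom.comp_apply, MulEquiv.coe_toMonoidHom,
      EmbeddingLike.map_eq_one_iff]
    exact (EmbeddingLike.map_eq_one_iff (f := e)).trans
      (QuotientGroup.eq_one_iff (N := Subgroup.normalClosure (rels : Set (FreeGroup (Fin n)))) w)
  have hρsur : Function.Surjective ρ :=
    e.surjective.comp (QuotientGroup.mk'_surjective _)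
  choose hfun hspec using fun j : Fin n => hsur (ρ (FreeGroup.of j))
  set h : FreeGroup (Fin n) →* FreeGroup (Fin 3) := FreeGroup.lift hfun with hh
  have hπh : ∀ w, π (h w) = ρ w := by
    have : π.comp h = ρ := FreeGroup.ext_hom _ _ (fun j => by
      simp only [MonoidHom.comp_apply, hh, lift_apply_of]; exact hspec j)
    intro w
    rw [← this]; rfl
  choose gfun gspec using fun i : Fin 3 => hρsur (π (FreeGroup.of i))
  set g : FreeGroup (Fin 3) →* FreeGroup (Fin n) := FreeGroup.lift gfun with hg
  have hρg : ∀ w, ρ (g w) = π w := by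
    have : ρ.comp g = π := FreeGroup.ext_hom _ _ (fun i => by
      simp only [MonoidHom.comp_apply, hg, lift_apply_of]; exact gspec i)
    intro w
    rw [← this]; rfl
  set T : Set (FreeGroup (Fin 3)) :=
    Set.range (fun i : Fin 3 => (FreeGroup.of i)⁻¹ * h (g (FreeGroup.of i))) with hT
  refine ⟨(h '' (rels : Set (FreeGroup (Fin n)))) ∪ T, ?_, ?_, ?_⟩
  · exact (rels.finite_toSet.image h).union (Set.finite_range _)
  · rintro w (⟨r, hr, rfl⟩ | ⟨i, rfl⟩)
    · simp only [SetLike.mem_coe]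
      rw [MonoidHom.mem_ker, hπh]
      have : r ∈ ρ.ker := hρker ▸ Subgroup.subset_normalClosure hr
      exact this
    · simp only [SetLike.mem_coe]
      rw [MonoidHom.mem_ker, _root_.map_mul, _root_.map_inv, hπh, hρg]
      simp
  · intro w hw
    set Ncl := Subgroup.normalClosure ((h '' (rels : Set (FreeGroup (Fin n)))) ∪ T) with hN
    have h1 : h (g w) ∈ Ncl := by
      have hgw : g w ∈ Subgroup.normalClosure (rels : Set (FreeGroup (Fin n))) := by
        rw [← hρker, MonoidHom.mem_ker, hρg]; exact hw
      have himg : Subgroup.normalClosure (rels : Set (FreeGroup (Fin n)))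
          ≤ Subgroup.comap h Ncl := by
        have : (Subgroup.comap h Ncl).Normal :=
          Subgroup.Normal.comap Subgroup.normalClosure_normal h
        exact Subgroup.normalClosure_le_normal
          (fun r hr => Subgroup.subset_normalClosure (Or.inl ⟨r, hr, rfl⟩))
      exact himg hgw
    have h2 : ∀ u : FreeGroup (Fin 3), u⁻¹ * h (g u) ∈ Ncl := by
      intro u
      induction u using FreeGroup.induction_on with
      | C1 =>
          simp only [_root_.map_one, inv_one, one_mul]
          exact Ncl.one_mem
      | of i =>
          apply Subgroup.subset_normalClosure
          exact Or.inr ⟨i, rfl⟩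
      | inv_of i ih =>
          have heq : (pure i : FreeGroup (Fin 3)) * ((pure i)⁻¹ * h (g (pure i)))⁻¹
                * (pure i : FreeGroup (Fin 3))⁻¹
              = ((pure i)⁻¹)⁻¹ * h (g ((pure i)⁻¹)) := by
            rw [_root_.map_inv, _root_.map_inv]; group
          show ((pure i : FreeGroup (Fin 3))⁻¹)⁻¹ * h (g ((pure i)⁻¹)) ∈ Ncl
          rw [← heq]
          exact Subgroup.normalClosure_normal.conj_mem _ (Ncl.inv_mem ih) _
      | mul u v ihu ihv =>
          have heq : (v⁻¹ * (u⁻¹ * h (g u)) * (v⁻¹)⁻¹) * (v⁻¹ * h (g v))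
              = (u*v)⁻¹ * h (g (u*v)) := by
            rw [_root_.map_mul, _root_.map_mul]; group
          rw [← heq]
          exact Ncl.mul_mem (Subgroup.normalClosure_normal.conj_mem _ ihu _) ihv
    have hw' : h (g w) * (w⁻¹ * h (g w))⁻¹ = w := by group
    rw [← hw']
    exact Ncl.mul_mem h1 (Ncl.inv_mem (h2 w))


/-- compactness for normal closures of ℤ-indexed families -/
lemma finite_subset_ncl {G : Type*} [Group G] (r : ℤ → G) (S : Set G) (hS : S.Finite)
    (h : S ⊆ Subgroup.normalClosure (Set.range r)) :
    ∃ K : Finset ℤ, S ⊆ Subgroup.normalClosure (r '' ↑K) := by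
  classical
  set f : Finset ℤ → Subgroup G := fun K => Subgroup.normalClosure (r '' ↑K) with hf
  have hdir : Directed (· ≤ ·) f := by
    intro K1 K2
    refine ⟨K1 ∪ K2, ?_, ?_⟩ <;>
      exact Subgroup.normalClosure_mono (Set.image_mono (by intro x hx; simp_all))
  have hnormal : (⨆ K, f K).Normal := by
    constructor
    intro x hx gg
    rw [Subgroup.mem_iSup_of_directed hdir] at hx ⊢
    obtain ⟨K, hK⟩ := hx
    exact ⟨K, Subgroup.normalClosure_normal.conj_mem _ hK _⟩
  have hle : Subgroup.normalClosure (Set.range r) ≤ ⨆ K, f K := by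
    apply Subgroup.normalClosure_le_normal
    rintro _ ⟨k, rfl⟩
    have h1 : r k ∈ f {k} := Subgroup.subset_normalClosure (by simp)
    exact le_iSup f ({k} : Finset ℤ) h1
  have hx : ∀ x ∈ S, ∃ K, x ∈ f K := fun x hxS =>
    (Subgroup.mem_iSup_of_directed hdir).mp (hle (h hxS))
  choose! K hK using hx
  refine ⟨hS.toFinset.sup K, ?_⟩
  intro x hxS
  have hmono : f (K x) ≤ f (hS.toFinset.sup K) :=
    Subgroup.normalClosure_mono (Set.image_mono
      (by exact Finset.coe_subset.mpr (Finset.le_sup (hS.mem_toFinset.mpr hxS))))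
  exact hmono (hK x hxS)

/-! ### The witness quotients -/

/-- the twisting endomorphism inverting the m-th generator -/
def tw (m : ℤ) : FZ →* FZ := FreeGroup.lift (fun i => if i = m then (of i)⁻¹ else of i)

lemma tw_tw (m : ℤ) : (tw m).comp (tw m) = MonoidHom.id FZ := by
  apply FreeGroup.ext_hom
  intro i
  by_cases hi : i = m <;> simp [tw, hi]

/-- the twist as an automorphism -/
def twAut (m : ℤ) : MulAut FZ := MonoidHom.toMulEquiv (tw m) (tw m) (tw_tw m) (tw_tw m)

@[simp] lemma twAut_of (m i : ℤ) : twAut m (of i) = if i = m then (of i)⁻¹ else of i := by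
  show tw m (of i) = _
  simp [tw]

/-- the twisted action of F2 on FZ -/
def ψw (m : ℤ) : F2 →* MulAut FZ := FreeGroup.lift ![shift, twAut (m+1) * shift]

/-- the witness group -/
abbrev GW (m : ℤ) := FZ ⋊[ψw m] F2

/-- the witness homomorphism -/
def φw (m : ℤ) : F3 →* GW m := FreeGroup.lift ![inr (of 0), inr (of 1), inl (of 0)]

lemma ψw_of0 (m : ℤ) : ψw m (of 0) = shift := by simp [ψw]
lemma ψw_of1 (m : ℤ) : ψw m (of 1) = twAut (m+1) * shift := by simp [ψw]

lemma φw_cw (m k : ℤ) : φw m (cw k) = inl (of k) := by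
  have h0 : φw m (of 0) = inr (of 0) := by simp [φw]
  have h2 : φw m (of 2) = inl (of 0) := by simp [φw]
  have key : (inl ((shift^k) (of 0)) : GW m) = inr ((of 0 : F2)^k) * inl ((of 0 : FZ)) *
      (inr ((of 0 : F2)^k))⁻¹ := by
    rw [← _root_.map_inv, ← inl_aut, _root_.map_zpow, ψw_of0]
  rw [cw, _root_.map_mul, _root_.map_mul, _root_.map_zpow, _root_.map_zpow, h0, h2,
    ← _root_.map_zpow, ← _root_.map_zpow, zpow_neg, _root_.map_inv, ← key, shift_zpow_of,
    zero_add]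

lemma φw_rel (m k : ℤ) : φw m (rel k) =
    inl (shift⁻¹ (twAut (m+1) (of (k+1))) * (of k)⁻¹) := by
  have hu : φw m ((of 0 : F3)⁻¹ * of 1) = inr ((of 0 : F2)⁻¹ * of 1) := by
    rw [_root_.map_mul, _root_.map_inv, _root_.map_mul, _root_.map_inv]
    simp [φw]
  rw [rel, map_commutatorElement, hu, φw_cw, commutatorElement_def]
  rw [← _root_.map_inv inr ((of 0 : F2)⁻¹ * of 1), ← _root_.map_inv inl (of k), ← inl_aut,
    ← _root_.map_mul]
  congr 1

lemma φw_rel_ne (m k : ℤ) (hk : k ≠ m) : φw m (rel k) = 1 := by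
  rw [φw_rel]
  have h1 : twAut (m+1) (of (k+1)) = of (k+1) := by
    rw [twAut_of, if_neg (by omega)]
  rw [h1, shift_inv_of]
  have : k + 1 - 1 = k := by ring
  rw [this, mul_inv_cancel, _root_.map_one]

/-- exponent sum homomorphism on the free group over ℤ -/
def expSum : FZ →* Multiplicative ℤ := FreeGroup.lift (fun _ => Multiplicative.ofAdd 1)

lemma φw_rel_m (m : ℤ) : φw m (rel m) ≠ 1 := by
  rw [φw_rel]
  have h1 : twAut (m+1) (of (m+1)) = (of (m+1))⁻¹ := by
    rw [twAut_of, if_pos rfl]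
  rw [h1, _root_.map_inv, shift_inv_of]
  have h2 : m + 1 - 1 = m := by ring
  rw [h2]
  intro hcon
  have h3 : (of m : FZ)⁻¹ * (of m)⁻¹ = 1 := by
    have := inl_injective (φ := ψw m) (hcon.trans (_root_.map_one inl).symm)
    exact this
  have h4 := congrArg expSum h3
  rw [_root_.map_mul, _root_.map_inv, _root_.map_one, expSum, lift_apply_of] at h4
  have h5 := congrArg Multiplicative.toAdd h4
  simp at h5

end Stallings


lemma Stallings.range_fg : Stallings.pi'.range.FG := by
  rw [Subgroup.fg_iff]
  refine ⟨Set.range (fun i : Fin 3 => Stallings.pi' (FreeGroup.of i)), ?_, Set.finite_range _⟩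
  rw [MonoidHom.range_eq_map, ← FreeGroup.closure_range_of (Fin 3), MonoidHom.map_closure,
    ← Set.range_comp]
  rfl

theorem stmt_10 : ¬ CoherentGroup (FreeGroup (Fin 2) × FreeGroup (Fin 2)) := by
  intro hcoh
  have hfp := hcoh Stallings.pi'.range Stallings.range_fg
  obtain ⟨S, hSfin, hSker, hkerle⟩ := Stallings.neumann hfp Stallings.pi'.rangeRestrict
    (MonoidHom.rangeRestrict_surjective _)
  rw [MonoidHom.ker_rangeRestrict] at hSker hkerle
  have hS_sub : S ⊆ Subgroup.normalClosure (Set.range Stallings.rel) := fun s hs =>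
    Stallings.ker_pi_le (hSker hs)
  obtain ⟨K₀, hK₀⟩ := Stallings.finite_subset_ncl Stallings.rel S hSfin hS_sub
  obtain ⟨m, hm⟩ := Infinite.exists_notMem_finset K₀
  have h1 : Stallings.rel m ∈ Subgroup.normalClosure (Stallings.rel '' ↑K₀) :=
    (le_trans hkerle (Subgroup.normalClosure_le_normal hK₀)) (Stallings.rel_mem_ker m)
  have h2 : Subgroup.normalClosure (Stallings.rel '' ↑K₀) ≤ (Stallings.φw m).ker := by
    apply Subgroup.normalClosure_le_normal
    rintro _ ⟨k, hk, rfl⟩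
    rw [SetLike.mem_coe, MonoidHom.mem_ker]
    exact Stallings.φw_rel_ne m k (fun hkm => hm (hkm ▸ hk))
  exact Stallings.φw_rel_m m (h2 h1)
end

section
/- Let S be the smallest class of finite simple labeled graphs (edges labeled by integers > 1) containing all graphs with at most two vertices and closed under disjoint unions and under 2-cones (adding a new vertex joined to every old vertex by an edge labeled 2). Then no graph in S is poisonous. -/
/-- A finite simple graph with edges labeled by integers greater than 1.
The label is only meaningful on adjacent pairs. -/
structure LabeledGraph (V : Type*) where
  Adj : V → V → Prop
  label : V → V → ℕ
  symm : ∀ u v, Adj u v → Adj v u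
  loopless : ∀ v, ¬ Adj v v
  label_symm : ∀ u v, label u v = label v u
  one_lt_label : ∀ u v, Adj u v → 1 < label u v

namespace LabeledGraph

variable {V : Type*} (Γ : LabeledGraph V)

/-- `u` and `v` are joined by an edge labeled 2. -/
def Adj2 (u v : V) : Prop := Γ.Adj u v ∧ Γ.label u v = 2

/-- `u` and `v` are joined by an edge labeled by some `m > 2`. -/
def AdjBig (u v : V) : Prop := Γ.Adj u v ∧ 2 < Γ.label u v

/-- Condition (1): an induced square with all edges labeled 2. -/
def Poisonous1 : Prop :=
  ∃ a b c d : V, a ≠ b ∧ a ≠ c ∧ a ≠ d ∧ b ≠ c ∧ b ≠ d ∧ c ≠ d ∧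
    Γ.Adj2 a b ∧ Γ.Adj2 b c ∧ Γ.Adj2 c d ∧ Γ.Adj2 d a ∧
    ¬ Γ.Adj a c ∧ ¬ Γ.Adj b d

/-- Condition (2): an induced non-closed path of length three with all edges
labeled 2. -/
def Poisonous2 : Prop :=
  ∃ a b c d : V, a ≠ b ∧ a ≠ c ∧ a ≠ d ∧ b ≠ c ∧ b ≠ d ∧ c ≠ d ∧
    Γ.Adj2 a b ∧ Γ.Adj2 b c ∧ Γ.Adj2 c d ∧
    ¬ Γ.Adj a c ∧ ¬ Γ.Adj a d ∧ ¬ Γ.Adj b d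

/-- Condition (3): an induced connected subgraph on exactly three vertices
with at most one edge labeled 2. -/
def Poisonous3 : Prop :=
  ∃ a b c : V, a ≠ b ∧ a ≠ c ∧ b ≠ c ∧
    ((Γ.Adj a b ∧ Γ.Adj b c) ∨ (Γ.Adj a b ∧ Γ.Adj a c) ∨ (Γ.Adj a c ∧ Γ.Adj b c)) ∧
    ¬ (Γ.Adj2 a b ∧ Γ.Adj2 b c) ∧ ¬ (Γ.Adj2 a b ∧ Γ.Adj2 a c) ∧
    ¬ (Γ.Adj2 a c ∧ Γ.Adj2 b c)

/-- Condition (4): an induced square with all edges labeled 2 together with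
one diagonal labeled by some `m > 2`. -/
def Poisonous4 : Prop :=
  ∃ a b c d : V, a ≠ b ∧ a ≠ c ∧ a ≠ d ∧ b ≠ c ∧ b ≠ d ∧ c ≠ d ∧
    Γ.Adj2 a b ∧ Γ.Adj2 b c ∧ Γ.Adj2 c d ∧ Γ.Adj2 d a ∧
    Γ.AdjBig a c ∧ ¬ Γ.Adj b d

/-- Condition (5): an induced square with all edges labeled 2 together with
both diagonals labeled by integers greater than 2. -/
def Poisonous5 : Prop :=
  ∃ a b c d : V, a ≠ b ∧ a ≠ c ∧ a ≠ d ∧ b ≠ c ∧ b ≠ d ∧ c ≠ d ∧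
    Γ.Adj2 a b ∧ Γ.Adj2 b c ∧ Γ.Adj2 c d ∧ Γ.Adj2 d a ∧
    Γ.AdjBig a c ∧ Γ.AdjBig b d

/-- A labeled graph is poisonous if it contains a full subgraph of one of the
five poisonous forms. -/
def Poisonous : Prop :=
  Γ.Poisonous1 ∨ Γ.Poisonous2 ∨ Γ.Poisonous3 ∨ Γ.Poisonous4 ∨ Γ.Poisonous5

end LabeledGraph
/-- Disjoint union of labeled graphs. -/
def LabeledGraph.disjUnion {V₁ V₂ : Type*} (Γ₁ : LabeledGraph V₁)
    (Γ₂ : LabeledGraph V₂) : LabeledGraph (V₁ ⊕ V₂) where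
  Adj u v := match u, v with
    | .inl a, .inl b => Γ₁.Adj a b
    | .inr a, .inr b => Γ₂.Adj a b
    | _, _ => False
  label u v := match u, v with
    | .inl a, .inl b => Γ₁.label a b
    | .inr a, .inr b => Γ₂.label a b
    | _, _ => 2
  symm := by rintro (a|a) (b|b) h <;> simp_all <;>
    first | exact Γ₁.symm _ _ h | exact Γ₂.symm _ _ h
  loopless := by rintro (a|a) h <;> simp_all <;>
    first | exact Γ₁.loopless _ h | exact Γ₂.loopless _ h
  label_symm := by rintro (a|a) (b|b) <;> simp <;>
    first | exact Γ₁.label_symm _ _ | exact Γ₂.label_symm _ _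
  one_lt_label := by rintro (a|a) (b|b) h <;> simp_all <;>
    first | exact Γ₁.one_lt_label _ _ h | exact Γ₂.one_lt_label _ _ h

/-- The 2-cone over a labeled graph: a new apex joined to every old vertex by
an edge labeled 2. -/
def LabeledGraph.cone2 {V : Type*} (Γ : LabeledGraph V) :
    LabeledGraph (Option V) where
  Adj u v := match u, v with
    | some a, some b => Γ.Adj a b
    | some _, none => True
    | none, some _ => True
    | none, none => False
  label u v := match u, v with
    | some a, some b => Γ.label a b
    | _, _ => 2
  symm := by rintro (_|a) (_|b) h <;> simp_all <;> exact Γ.symm _ _ h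
  loopless := by rintro (_|a) h <;> simp_all <;> exact Γ.loopless _ h
  label_symm := by rintro (_|a) (_|b) <;> simp <;> exact Γ.label_symm _ _
  one_lt_label := by rintro (_|a) (_|b) h <;> simp_all <;>
    first | exact Γ.one_lt_label _ _ h | norm_num

/-- The class `S`: the smallest class of labeled graphs (up to labeled
isomorphism) containing all graphs with at most two vertices and closed under
disjoint unions and 2-cones. -/
inductive InS : ∀ (V : Type u), LabeledGraph V → Prop
  | base (V : Type u) (Γ : LabeledGraph V) (h1 : Finite V) (h2 : Nat.card V ≤ 2) :
      InS V Γ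
  | disjUnion (V₁ V₂ : Type u) (Γ₁ : LabeledGraph V₁) (Γ₂ : LabeledGraph V₂) :
      InS V₁ Γ₁ → InS V₂ Γ₂ → InS (V₁ ⊕ V₂) (Γ₁.disjUnion Γ₂)
  | cone (V : Type u) (Γ : LabeledGraph V) : InS V Γ → InS (Option V) Γ.cone2
  | iso (V V' : Type u) (Γ : LabeledGraph V) (Γ' : LabeledGraph V') (e : V ≃ V')
      (hadj : ∀ u v, Γ'.Adj (e u) (e v) ↔ Γ.Adj u v)
      (hlab : ∀ u v, Γ.Adj u v → Γ'.label (e u) (e v) = Γ.label u v) :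
      InS V Γ → InS V' Γ'

namespace LabeledGraph

section simps
variable {V₁ V₂ : Type*} (Γ₁ : LabeledGraph V₁) (Γ₂ : LabeledGraph V₂)

@[simp] lemma du_adj_ll (a b : V₁) :
    (Γ₁.disjUnion Γ₂).Adj (.inl a) (.inl b) ↔ Γ₁.Adj a b := Iff.rfl
@[simp] lemma du_adj_rr (a b : V₂) :
    (Γ₁.disjUnion Γ₂).Adj (.inr a) (.inr b) ↔ Γ₂.Adj a b := Iff.rfl
@[simp] lemma du_adj_lr (a : V₁) (b : V₂) :
    (Γ₁.disjUnion Γ₂).Adj (.inl a) (.inr b) ↔ False := Iff.rfl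
@[simp] lemma du_adj_rl (a : V₂) (b : V₁) :
    (Γ₁.disjUnion Γ₂).Adj (.inr a) (.inl b) ↔ False := Iff.rfl
@[simp] lemma du_label_ll (a b : V₁) :
    (Γ₁.disjUnion Γ₂).label (.inl a) (.inl b) = Γ₁.label a b := rfl
@[simp] lemma du_label_rr (a b : V₂) :
    (Γ₁.disjUnion Γ₂).label (.inr a) (.inr b) = Γ₂.label a b := rfl

variable {V : Type*} (Γ : LabeledGraph V)

@[simp] lemma c_adj_ss (a b : V) : Γ.cone2.Adj (some a) (some b) ↔ Γ.Adj a b := Iff.rfl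
@[simp] lemma c_adj_sn (a : V) : Γ.cone2.Adj (some a) none ↔ True := Iff.rfl
@[simp] lemma c_adj_ns (b : V) : Γ.cone2.Adj none (some b) ↔ True := Iff.rfl
@[simp] lemma c_adj_nn : Γ.cone2.Adj none none ↔ False := Iff.rfl
@[simp] lemma c_label_ss (a b : V) : Γ.cone2.label (some a) (some b) = Γ.label a b := rfl
@[simp] lemma c_label_sn (a : V) : Γ.cone2.label (some a) none = 2 := rfl
@[simp] lemma c_label_ns (b : V) : Γ.cone2.label none (some b) = 2 := rfl

end simps

section mapping
variable {V W : Type*} (Γ : LabeledGraph V) (Δ : LabeledGraph W) (f : W → V)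
variable (hadj : ∀ u v, Γ.Adj (f u) (f v) ↔ Δ.Adj u v)
variable (hlab : ∀ u v, Δ.Adj u v → Γ.label (f u) (f v) = Δ.label u v)

include hadj hlab in
lemma adj2_map (u v : W) : Δ.Adj2 u v ↔ Γ.Adj2 (f u) (f v) := by
  constructor
  · rintro ⟨h1, h2⟩
    exact ⟨(hadj u v).mpr h1, (hlab u v h1).trans h2⟩
  · rintro ⟨h1, h2⟩
    have h1' := (hadj u v).mp h1
    exact ⟨h1', (hlab u v h1').symm.trans h2⟩

include hadj hlab in
lemma adjBig_map (u v : W) : Δ.AdjBig u v ↔ Γ.AdjBig (f u) (f v) := by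
  constructor
  · rintro ⟨h1, h2⟩
    exact ⟨(hadj u v).mpr h1, lt_of_lt_of_le h2 (hlab u v h1).ge⟩
  · rintro ⟨h1, h2⟩
    have h1' := (hadj u v).mp h1
    exact ⟨h1', lt_of_lt_of_le h2 (hlab u v h1').le⟩

include hadj hlab in
lemma poisonous_map (hf : Function.Injective f) : Δ.Poisonous → Γ.Poisonous := by
  have A2 := adj2_map Γ Δ f hadj hlab
  have AB := adjBig_map Γ Δ f hadj hlab
  rintro (⟨a,b,c,d,hab,hac,had,hbc,hbd,hcd,h1,h2,h3,h4,h5,h6⟩ |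
          ⟨a,b,c,d,hab,hac,had,hbc,hbd,hcd,h1,h2,h3,h4,h5,h6⟩ |
          ⟨a,b,c,hab,hac,hbc,hconn,h1,h2,h3⟩ |
          ⟨a,b,c,d,hab,hac,had,hbc,hbd,hcd,h1,h2,h3,h4,h5,h6⟩ |
          ⟨a,b,c,d,hab,hac,had,hbc,hbd,hcd,h1,h2,h3,h4,h5,h6⟩)
  · exact Or.inl ⟨f a, f b, f c, f d, hf.ne hab, hf.ne hac, hf.ne had, hf.ne hbc,
      hf.ne hbd, hf.ne hcd, (A2 a b).mp h1, (A2 b c).mp h2, (A2 c d).mp h3, (A2 d a).mp h4,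
      fun h => h5 ((hadj a c).mp h), fun h => h6 ((hadj b d).mp h)⟩
  · exact Or.inr <| Or.inl ⟨f a, f b, f c, f d, hf.ne hab, hf.ne hac, hf.ne had, hf.ne hbc,
      hf.ne hbd, hf.ne hcd, (A2 a b).mp h1, (A2 b c).mp h2, (A2 c d).mp h3,
      fun h => h4 ((hadj a c).mp h), fun h => h5 ((hadj a d).mp h),
      fun h => h6 ((hadj b d).mp h)⟩
  · refine Or.inr <| Or.inr <| Or.inl ⟨f a, f b, f c, hf.ne hab, hf.ne hac, hf.ne hbc, ?_,
      ?_, ?_, ?_⟩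
    · rcases hconn with ⟨x, y⟩ | ⟨x, y⟩ | ⟨x, y⟩
      · exact Or.inl ⟨(hadj a b).mpr x, (hadj b c).mpr y⟩
      · exact Or.inr <| Or.inl ⟨(hadj a b).mpr x, (hadj a c).mpr y⟩
      · exact Or.inr <| Or.inr ⟨(hadj a c).mpr x, (hadj b c).mpr y⟩
    · exact fun h => h1 ⟨(A2 a b).mpr h.1, (A2 b c).mpr h.2⟩
    · exact fun h => h2 ⟨(A2 a b).mpr h.1, (A2 a c).mpr h.2⟩
    · exact fun h => h3 ⟨(A2 a c).mpr h.1, (A2 b c).mpr h.2⟩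
  · exact Or.inr <| Or.inr <| Or.inr <| Or.inl ⟨f a, f b, f c, f d, hf.ne hab, hf.ne hac,
      hf.ne had, hf.ne hbc, hf.ne hbd, hf.ne hcd, (A2 a b).mp h1, (A2 b c).mp h2,
      (A2 c d).mp h3, (A2 d a).mp h4, (AB a c).mp h5, fun h => h6 ((hadj b d).mp h)⟩
  · exact Or.inr <| Or.inr <| Or.inr <| Or.inr ⟨f a, f b, f c, f d, hf.ne hab, hf.ne hac,
      hf.ne had, hf.ne hbc, hf.ne hbd, hf.ne hcd, (A2 a b).mp h1, (A2 b c).mp h2,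
      (A2 c d).mp h3, (A2 d a).mp h4, (AB a c).mp h5, (AB b d).mp h6⟩

end mapping

lemma no_three {V : Type*} [Finite V] (h2 : Nat.card V ≤ 2) {a b c : V}
    (hab : a ≠ b) (hac : a ≠ c) (hbc : b ≠ c) : False := by
  have hf : Function.Injective (![a, b, c] : Fin 3 → V) := by
    intro i j hij
    fin_cases i <;> fin_cases j <;> simp_all [hab.symm, hac.symm, hbc.symm] <;>
      first | exact hab (by simpa using hij) | exact hac (by simpa using hij) |
        exact hbc (by simpa using hij) | rfl
  have := Nat.card_le_card_of_injective _ hf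
  simp at this
  omega

lemma disjUnion_poisonous {V₁ V₂ : Type*} (Γ₁ : LabeledGraph V₁) (Γ₂ : LabeledGraph V₂) :
    (Γ₁.disjUnion Γ₂).Poisonous → Γ₁.Poisonous ∨ Γ₂.Poisonous := by
  rintro (⟨a|a,b|b,c|c,d|d,hab,hac,had,hbc,hbd,hcd,h1,h2,h3,h4,h5,h6⟩ |
          ⟨a|a,b|b,c|c,d|d,hab,hac,had,hbc,hbd,hcd,h1,h2,h3,h4,h5,h6⟩ |
          ⟨a|a,b|b,c|c,hab,hac,hbc,hconn,h1,h2,h3⟩ |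
          ⟨a|a,b|b,c|c,d|d,hab,hac,had,hbc,hbd,hcd,h1,h2,h3,h4,h5,h6⟩ |
          ⟨a|a,b|b,c|c,d|d,hab,hac,had,hbc,hbd,hcd,h1,h2,h3,h4,h5,h6⟩) <;>
    simp_all only [Adj2, AdjBig, du_adj_ll, du_adj_rr, du_adj_lr, du_adj_rl,
      du_label_ll, du_label_rr, ne_eq, Sum.inl.injEq, Sum.inr.injEq,
      eq_self_iff_true, not_true, not_false_iff, false_and, and_false, true_and,
      and_true, false_or, or_false, or_self] <;>
    first
      | exact Or.inl <| Or.inl ⟨a,b,c,d,hab,hac,had,hbc,hbd,hcd,h1,h2,h3,h4,h5,h6⟩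
      | exact Or.inr <| Or.inl ⟨a,b,c,d,hab,hac,had,hbc,hbd,hcd,h1,h2,h3,h4,h5,h6⟩
      | exact Or.inl <| Or.inr <| Or.inl ⟨a,b,c,d,hab,hac,had,hbc,hbd,hcd,h1,h2,h3,h4,h5,h6⟩
      | exact Or.inr <| Or.inr <| Or.inl ⟨a,b,c,d,hab,hac,had,hbc,hbd,hcd,h1,h2,h3,h4,h5,h6⟩
      | exact Or.inl <| Or.inr <| Or.inr <| Or.inl ⟨a,b,c,hab,hac,hbc,hconn,h1,h2,h3⟩
      | exact Or.inr <| Or.inr <| Or.inr <| Or.inl ⟨a,b,c,hab,hac,hbc,hconn,h1,h2,h3⟩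
      | exact Or.inl <| Or.inr <| Or.inr <| Or.inr <| Or.inl
          ⟨a,b,c,d,hab,hac,had,hbc,hbd,hcd,h1,h2,h3,h4,h5,h6⟩
      | exact Or.inr <| Or.inr <| Or.inr <| Or.inr <| Or.inl
          ⟨a,b,c,d,hab,hac,had,hbc,hbd,hcd,h1,h2,h3,h4,h5,h6⟩
      | exact Or.inl <| Or.inr <| Or.inr <| Or.inr <| Or.inr
          ⟨a,b,c,d,hab,hac,had,hbc,hbd,hcd,h1,h2,h3,h4,h5,h6⟩
      | exact Or.inr <| Or.inr <| Or.inr <| Or.inr <| Or.inr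
          ⟨a,b,c,d,hab,hac,had,hbc,hbd,hcd,h1,h2,h3,h4,h5,h6⟩

lemma cone2_poisonous {V : Type*} (Γ : LabeledGraph V) :
    Γ.cone2.Poisonous → Γ.Poisonous := by
  rintro (⟨_|a,_|b,_|c,_|d,hab,hac,had,hbc,hbd,hcd,h1,h2,h3,h4,h5,h6⟩ |
          ⟨_|a,_|b,_|c,_|d,hab,hac,had,hbc,hbd,hcd,h1,h2,h3,h4,h5,h6⟩ |
          ⟨_|a,_|b,_|c,hab,hac,hbc,hconn,h1,h2,h3⟩ |
          ⟨_|a,_|b,_|c,_|d,hab,hac,had,hbc,hbd,hcd,h1,h2,h3,h4,h5,h6⟩ |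
          ⟨_|a,_|b,_|c,_|d,hab,hac,had,hbc,hbd,hcd,h1,h2,h3,h4,h5,h6⟩) <;>
    simp_all only [Adj2, AdjBig, c_adj_ss, c_adj_sn, c_adj_ns, c_adj_nn,
      c_label_ss, c_label_sn, c_label_ns, ne_eq, Option.some.injEq,
      eq_self_iff_true, not_true, not_false_iff, false_and, and_false, true_and,
      and_true, false_or, or_false, or_self, and_self, lt_self_iff_false,
      Nat.lt_irrefl] <;>
    first
      | exact Or.inl ⟨a,b,c,d,hab,hac,had,hbc,hbd,hcd,h1,h2,h3,h4,h5,h6⟩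
      | exact Or.inr <| Or.inl ⟨a,b,c,d,hab,hac,had,hbc,hbd,hcd,h1,h2,h3,h4,h5,h6⟩
      | exact Or.inr <| Or.inr <| Or.inl ⟨a,b,c,hab,hac,hbc,hconn,h1,h2,h3⟩
      | exact Or.inr <| Or.inr <| Or.inr <| Or.inl
          ⟨a,b,c,d,hab,hac,had,hbc,hbd,hcd,h1,h2,h3,h4,h5,h6⟩
      | exact Or.inr <| Or.inr <| Or.inr <| Or.inr
          ⟨a,b,c,d,hab,hac,had,hbc,hbd,hcd,h1,h2,h3,h4,h5,h6⟩
end LabeledGraph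

theorem stmt_12 (V : Type u) (Γ : LabeledGraph V) (h : InS V Γ) :
    ¬ Γ.Poisonous := by
  induction h with
  | base V Γ h1 h2 =>
    rintro (⟨a,b,c,d,hab,hac,had,hbc,hbd,hcd,_⟩ | ⟨a,b,c,d,hab,hac,had,hbc,hbd,hcd,_⟩ |
            ⟨a,b,c,hab,hac,hbc,_⟩ | ⟨a,b,c,d,hab,hac,had,hbc,hbd,hcd,_⟩ |
            ⟨a,b,c,d,hab,hac,had,hbc,hbd,hcd,_⟩) <;>
      exact LabeledGraph.no_three h2 hab hac hbc
  | disjUnion V₁ V₂ Γ₁ Γ₂ _ _ ih₁ ih₂ =>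
    intro hp
    rcases LabeledGraph.disjUnion_poisonous Γ₁ Γ₂ hp with h | h
    · exact ih₁ h
    · exact ih₂ h
  | cone V Γ _ ih =>
    intro hp
    exact ih (LabeledGraph.cone2_poisonous Γ hp)
  | iso V V' Γ Γ' e hadj hlab _ ih =>
    intro hp
    refine ih (LabeledGraph.poisonous_map Γ Γ' (⇑e.symm) ?_ ?_ e.symm.injective hp)
    · intro u v
      have := hadj (e.symm u) (e.symm v)
      simpa using this.symm
    · intro u v huv
      have h' : Γ.Adj (e.symm u) (e.symm v) := by
        have := hadj (e.symm u) (e.symm v)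
        simpa using this.mp (by simpa using huv)
      have := hlab (e.symm u) (e.symm v) h'
      simpa using this.symm
end

section
/- Let Γ be a finite simple labeled graph (edges labeled by integers > 1) that is not poisonous. Then Γ belongs to the class S of graphs obtained from graphs with at most two vertices by iterated disjoint unions and 2-cones. -/
namespace LabeledGraph

variable {V : Type*} (Γ : LabeledGraph V)

-- AUX START
def induce (S : Set V) : LabeledGraph S where
  Adj a b := Γ.Adj a b
  label a b := Γ.label a b
  symm a b h := Γ.symm _ _ h
  loopless a h := Γ.loopless _ h
  label_symm a b := Γ.label_symm _ _
  one_lt_label a b h := Γ.one_lt_label _ _ h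

variable {Γ}

lemma Adj2.symm1 {u v : V} (h : Γ.Adj2 u v) : Γ.Adj2 v u :=
  ⟨Γ.symm _ _ h.1, (Γ.label_symm v u).trans h.2⟩

lemma Adj2.adj {u v : V} (h : Γ.Adj2 u v) : Γ.Adj u v := h.1

lemma Adj2.ne {u v : V} (h : Γ.Adj2 u v) : u ≠ v := by
  rintro rfl; exact Γ.loopless _ h.1

lemma adj2_or_big {u v : V} (h : Γ.Adj u v) : Γ.Adj2 u v ∨ Γ.AdjBig u v := by
  have := Γ.one_lt_label u v h
  rcases Nat.lt_or_ge 2 (Γ.label u v) with h2 | h2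
  · exact Or.inr ⟨h, h2⟩
  · exact Or.inl ⟨h, le_antisymm h2 this⟩

lemma not_poisonous_induce {S : Set V} (h : ¬Γ.Poisonous) : ¬(Γ.induce S).Poisonous := by
  intro hp
  apply h
  have inj : ∀ {a b : S}, a ≠ b → (a : V) ≠ (b : V) := fun hab => Subtype.coe_ne_coe.mpr hab
  rcases hp with ⟨a,b,c,d,h1,h2,h3,h4,h5,h6,rest⟩ | ⟨a,b,c,d,h1,h2,h3,h4,h5,h6,rest⟩ |
    ⟨a,b,c,h1,h2,h3,rest⟩ | ⟨a,b,c,d,h1,h2,h3,h4,h5,h6,rest⟩ | ⟨a,b,c,d,h1,h2,h3,h4,h5,h6,rest⟩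
  · exact Or.inl ⟨a,b,c,d, inj h1, inj h2, inj h3, inj h4, inj h5, inj h6, rest⟩
  · exact Or.inr (Or.inl ⟨a,b,c,d, inj h1, inj h2, inj h3, inj h4, inj h5, inj h6, rest⟩)
  · exact Or.inr (Or.inr (Or.inl ⟨a,b,c, inj h1, inj h2, inj h3, rest⟩))
  · exact Or.inr (Or.inr (Or.inr (Or.inl ⟨a,b,c,d, inj h1, inj h2, inj h3, inj h4, inj h5, inj h6, rest⟩)))
  · exact Or.inr (Or.inr (Or.inr (Or.inr ⟨a,b,c,d, inj h1, inj h2, inj h3, inj h4, inj h5, inj h6, rest⟩)))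

/-- From non-poisonousness (condition 3): every connected triple has at
least two edges labeled 2. -/
lemma two2 (h : ¬Γ.Poisonous) {a b c : V} (hab : a ≠ b) (hac : a ≠ c) (hbc : b ≠ c)
    (hconn : (Γ.Adj a b ∧ Γ.Adj b c) ∨ (Γ.Adj a b ∧ Γ.Adj a c) ∨ (Γ.Adj a c ∧ Γ.Adj b c)) :
    (Γ.Adj2 a b ∧ Γ.Adj2 b c) ∨ (Γ.Adj2 a b ∧ Γ.Adj2 a c) ∨ (Γ.Adj2 a c ∧ Γ.Adj2 b c) := by
  by_contra hno
  push_neg at hno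
  exact h (Or.inr (Or.inr (Or.inl ⟨a, b, c, hab, hac, hbc, hconn,
    fun hh => hno.1 hh.1 hh.2, fun hh => hno.2.1 hh.1 hh.2, fun hh => hno.2.2 hh.1 hh.2⟩)))

/-- helper : if `Adj a b`, `Adj b c` (a path) then we get 2-labels -/
lemma path_two2 (h : ¬Γ.Poisonous) {a b c : V} (hab : a ≠ b) (hac : a ≠ c) (hbc : b ≠ c)
    (h1 : Γ.Adj a b) (h2 : Γ.Adj b c) :
    (Γ.Adj2 a b ∧ Γ.Adj2 b c) ∨ (Γ.Adj2 a b ∧ Γ.Adj2 a c) ∨ (Γ.Adj2 a c ∧ Γ.Adj2 b c) :=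
  two2 h hab hac hbc (Or.inl ⟨h1, h2⟩)

/-- P4 chord lemma -/
lemma chordP4 (h : ¬Γ.Poisonous) {a b c d : V}
    (hab : a ≠ b) (hac : a ≠ c) (had : a ≠ d) (hbc : b ≠ c) (hbd : b ≠ d) (hcd : c ≠ d)
    (e1 : Γ.Adj2 a b) (e2 : Γ.Adj2 b c) (e3 : Γ.Adj2 c d) :
    Γ.Adj2 a c ∨ Γ.Adj2 b d ∨ Γ.Adj2 a d := by
  by_cases h1 : Γ.Adj a c
  · rcases path_two2 h hac had hcd h1 e3.1 with ⟨x, y⟩ | ⟨x, y⟩ | ⟨x, y⟩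
    · exact Or.inl x
    · exact Or.inl x
    · exact Or.inr (Or.inr x)
  by_cases h2 : Γ.Adj a d
  · -- triple a d c : Adj a d, Adj d c
    rcases path_two2 h had hac (Ne.symm hcd) h2 (Γ.symm _ _ e3.1) with ⟨x, y⟩ | ⟨x, y⟩ | ⟨x, y⟩
    · exact Or.inr (Or.inr x)
    · exact Or.inr (Or.inr x)
    · exact absurd x.1 h1
  by_cases h3 : Γ.Adj b d
  · -- triple a b d : Adj a b, Adj b d
    rcases path_two2 h hab had hbd e1.1 h3 with ⟨x, y⟩ | ⟨x, y⟩ | ⟨x, y⟩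
    · exact Or.inr (Or.inl y)
    · exact absurd y.1 h2
    · exact absurd x.1 h2
  exact absurd (Or.inr (Or.inl ⟨a,b,c,d,hab,hac,had,hbc,hbd,hcd,e1,e2,e3,h1,h2,h3⟩)) h

/-- C4 chord lemma -/
lemma chordC4 (h : ¬Γ.Poisonous) {a b c d : V}
    (hab : a ≠ b) (hac : a ≠ c) (had : a ≠ d) (hbc : b ≠ c) (hbd : b ≠ d) (hcd : c ≠ d)
    (e1 : Γ.Adj2 a b) (e2 : Γ.Adj2 b c) (e3 : Γ.Adj2 c d) (e4 : Γ.Adj2 d a) :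
    Γ.Adj2 a c ∨ Γ.Adj2 b d := by
  by_cases h1 : Γ.Adj a c
  · rcases adj2_or_big h1 with h1' | h1'
    · exact Or.inl h1'
    · by_cases h2 : Γ.Adj b d
      · rcases adj2_or_big h2 with h2' | h2'
        · exact Or.inr h2'
        · exact absurd (Or.inr (Or.inr (Or.inr (Or.inr
            ⟨a,b,c,d,hab,hac,had,hbc,hbd,hcd,e1,e2,e3,e4,h1',h2'⟩)))) h
      · exact absurd (Or.inr (Or.inr (Or.inr (Or.inl
          ⟨a,b,c,d,hab,hac,had,hbc,hbd,hcd,e1,e2,e3,e4,h1',h2⟩)))) h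
  · by_cases h2 : Γ.Adj b d
    · rcases adj2_or_big h2 with h2' | h2'
      · exact Or.inr h2'
      · -- square b c d a with big diagonal b d and missing diagonal c a
        exact absurd (Or.inr (Or.inr (Or.inr (Or.inl
          ⟨b,c,d,a,hbc,hbd,hab.symm,hcd,hac.symm,had.symm,e2,e3,e4,e1,h2',
            fun hh => h1 (Γ.symm _ _ hh)⟩)))) h
    · exact absurd (Or.inl ⟨a,b,c,d,hab,hac,had,hbc,hbd,hcd,e1,e2,e3,e4,h1,h2⟩) h


section Conn

variable [Finite V]

lemma exists_third (hcard : 3 ≤ Nat.card V) (a b : V) :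
    ∃ c : V, c ≠ a ∧ c ≠ b := by
  by_contra hno
  push_neg at hno
  have hsub : (Set.univ : Set V) ⊆ {a, b} := by
    intro x _
    by_cases hxa : x = a
    · exact hxa ▸ Set.mem_insert _ _
    · exact (hno x hxa) ▸ Set.mem_insert_of_mem _ rfl
  have := Set.ncard_le_ncard hsub (Set.toFinite _)
  rw [Set.ncard_univ] at this
  have h2 : ({a, b} : Set V).ncard ≤ 2 := by
    apply le_trans (Set.ncard_insert_le _ _)
    simp [Set.ncard_singleton]
  omega

lemma adj_reach2 (h : ¬Γ.Poisonous) (hconn : ∀ x y : V, Relation.ReflTransGen Γ.Adj x y)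
    (hcard : 3 ≤ Nat.card V) {a b : V} (hadj : Γ.Adj a b) :
    Relation.ReflTransGen Γ.Adj2 a b := by
  rcases adj2_or_big hadj with h2 | hbig
  · exact Relation.ReflTransGen.single h2
  have hab : a ≠ b := fun e => Γ.loopless a (e ▸ hadj)
  have hnab : ¬ Γ.Adj2 a b := fun hh => absurd (hh.2 ▸ hbig.2) (lt_irrefl 2)
  have hc : ∃ c, c ≠ a ∧ c ≠ b ∧ (Γ.Adj a c ∨ Γ.Adj b c) := by
    by_contra hno
    push_neg at hno
    obtain ⟨w, hwa, hwb⟩ := exists_third hcard a b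
    have hreach : ∀ x, Relation.ReflTransGen Γ.Adj a x → x = a ∨ x = b := by
      intro x hx
      induction hx with
      | refl => exact Or.inl rfl
      | tail hp hstep ih =>
        by_contra hx2
        push_neg at hx2
        rcases hno _ hx2.1 hx2.2 with ⟨n1, n2⟩
        rcases ih with rfl | rfl
        · exact n1 hstep
        · exact n2 hstep
    rcases hreach w (hconn a w) with rfl | rfl
    · exact hwa rfl
    · exact hwb rfl
  obtain ⟨c, hca, hcb, hAdj⟩ := hc
  rcases hAdj with hac | hbc
  · rcases path_two2 h hab.symm hcb.symm hca.symm (Γ.symm _ _ hadj) hac with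
      ⟨x, _⟩ | ⟨x, _⟩ | ⟨x, y⟩
    · exact absurd x.symm1 hnab
    · exact absurd x.symm1 hnab
    · exact (Relation.ReflTransGen.single y).tail x.symm1
  · rcases path_two2 h hab hca.symm hcb.symm hadj hbc with
      ⟨x, _⟩ | ⟨x, _⟩ | ⟨x, y⟩
    · exact absurd x hnab
    · exact absurd x hnab
    · exact (Relation.ReflTransGen.single x).tail y.symm1

lemma reach2 (h : ¬Γ.Poisonous) (hconn : ∀ x y : V, Relation.ReflTransGen Γ.Adj x y)
    (hcard : 3 ≤ Nat.card V) (x y : V) : Relation.ReflTransGen Γ.Adj2 x y := by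
  have hxy := hconn x y
  induction hxy with
  | refl => exact Relation.ReflTransGen.refl
  | tail hp hstep ih => exact ih.trans (adj_reach2 h hconn hcard hstep)

end Conn

lemma dist2 {v u : V} (h : Relation.ReflTransGen Γ.Adj2 v u) :
    u = v ∨ Γ.Adj2 v u ∨ ∃ u' w, u' ≠ v ∧ ¬ Γ.Adj2 v u' ∧ Γ.Adj2 v w ∧ Γ.Adj2 w u' := by
  induction h with
  | refl => exact Or.inl rfl
  | @tail m x hp hstep ih =>
    rcases ih with rfl | hvm | hex
    · exact Or.inr (Or.inl hstep)
    · by_cases hxv : x = v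
      · exact Or.inl hxv
      by_cases hvx : Γ.Adj2 v x
      · exact Or.inr (Or.inl hvx)
      exact Or.inr (Or.inr ⟨x, m, hxv, hvx, hvm, hstep⟩)
    · exact Or.inr (Or.inr hex)

lemma exists_universal [Finite V] (h : ¬Γ.Poisonous)
    (hconn : ∀ x y : V, Relation.ReflTransGen Γ.Adj x y)
    (hcard : 3 ≤ Nat.card V) : ∃ v : V, ∀ u, u ≠ v → Γ.Adj2 v u := by
  have : Nonempty V := (Nat.card_pos_iff.mp (by omega)).1
  obtain ⟨v, hv⟩ := Finite.exists_max (fun x : V => {y | Γ.Adj2 x y}.ncard)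
  refine ⟨v, ?_⟩
  by_contra hnot
  push_neg at hnot
  obtain ⟨u0, hu0ne, hu0⟩ := hnot
  rcases dist2 (reach2 h hconn hcard v u0) with rfl | h2 | ⟨u, w, huv, hnadj, hvw, hwu⟩
  · exact hu0ne rfl
  · exact hu0 h2
  have hwv : w ≠ v := hvw.ne.symm
  have hwu' : w ≠ u := hwu.ne
  have key : ∀ a, Γ.Adj2 v a → a ≠ w → Γ.Adj2 w a := by
    intro a hva haw
    have hau : a ≠ u := fun e => hnadj (e ▸ hva)
    by_contra hwa
    rcases chordP4 h hwu'.symm huv hau.symm hwv haw.symm hva.ne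
      hwu.symm1 hvw.symm1 hva with huv2 | hwa2 | hua2
    · exact hnadj huv2.symm1
    · exact hwa hwa2
    · rcases chordC4 h hvw.ne huv.symm hva.ne hwu' haw.symm hau.symm
        hvw hwu hua2 hva.symm1 with hvu2 | hwa2
      · exact hnadj hvu2
      · exact hwa hwa2
  -- degree comparison
  set Nv := {y | Γ.Adj2 v y} with hNv
  set Nw := {y | Γ.Adj2 w y} with hNw
  have hsub : insert v (insert u (Nv \ {w})) ⊆ Nw := by
    intro x hx
    rcases hx with rfl | rfl | ⟨hx1, hx2⟩
    · exact hvw.symm1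
    · exact hwu
    · exact key x hx1 hx2
  have hvnot : v ∉ insert u (Nv \ {w}) := by
    intro hx
    rcases hx with rfl | ⟨hx1, _⟩
    · exact huv rfl
    · exact Γ.loopless v hx1.1
  have hunot : u ∉ Nv \ {w} := fun hx => hnadj hx.1
  have hwmem : w ∈ Nv := hvw
  have e1 : (insert v (insert u (Nv \ {w}))).ncard = (Nv \ {w}).ncard + 2 := by
    rw [Set.ncard_insert_of_notMem hvnot (Set.toFinite _),
      Set.ncard_insert_of_notMem hunot (Set.toFinite _)]
  have e2 : (Nv \ {w}).ncard + 1 = Nv.ncard :=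
    Set.ncard_diff_singleton_add_one hwmem (Set.toFinite _)
  have hle : (insert v (insert u (Nv \ {w}))).ncard ≤ Nw.ncard :=
    Set.ncard_le_ncard hsub (Set.toFinite _)
  have := hv w
  simp only [← hNv, ← hNw] at this
  omega

end LabeledGraph
lemma main_aux : ∀ (n : ℕ) (V : Type u) [Finite V] (Γ : LabeledGraph V),
    Nat.card V ≤ n → ¬Γ.Poisonous → InS V Γ := by
  intro n
  induction n with
  | zero =>
    intro V _ Γ hc _
    exact InS.base V Γ ‹_› (by omega)
  | succ n ih =>
    intro V _ Γ hc hp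
    by_cases hsmall : Nat.card V ≤ 2
    · exact InS.base V Γ ‹_› hsmall
    push_neg at hsmall
    by_cases hconn : ∀ x y : V, Relation.ReflTransGen Γ.Adj x y
    · -- connected: 2-cone
      obtain ⟨v, hv⟩ := LabeledGraph.exists_universal hp hconn (by omega)
      classical
      set S : Set V := {x | x ≠ v} with hSdef
      have hΓ' : ¬(Γ.induce S).Poisonous := LabeledGraph.not_poisonous_induce hp
      have hcard' : Nat.card S ≤ n := by
        have h1 : S ⊂ Set.univ :=
          ⟨Set.subset_univ _, fun hsub => (hsub (Set.mem_univ v)) rfl⟩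
        have h2 := Set.ncard_lt_ncard h1 (Set.toFinite _)
        rw [Set.ncard_univ] at h2
        rw [Nat.card_coe_set_eq]
        omega
      have hcone := InS.cone _ _ (ih ↥S (Γ.induce S) hcard' hΓ')
      refine InS.iso _ _ _ _ (Equiv.optionSubtypeNe v) ?_ ?_ hcone
      · rintro (_ | a) (_ | b)
        · exact iff_of_false (Γ.loopless v) id
        · exact iff_of_true (hv b b.2).1 trivial
        · exact iff_of_true (Γ.symm _ _ (hv a a.2).1) trivial
        · exact Iff.rfl
      · rintro (_ | a) (_ | b) hadj
        · exact absurd hadj id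
        · simp only [Equiv.optionSubtypeNe_none, Equiv.optionSubtypeNe_some]
          exact (hv b b.2).2
        · simp only [Equiv.optionSubtypeNe_none, Equiv.optionSubtypeNe_some]
          exact (Γ.label_symm _ _).trans (hv a a.2).2
        · exact rfl
    · -- disconnected: disjoint union
      push_neg at hconn
      obtain ⟨x₀, y₀, hxy⟩ := hconn
      classical
      set C : Set V := {z | Relation.ReflTransGen Γ.Adj x₀ z} with hCdef
      have hx₀ : x₀ ∈ C := Relation.ReflTransGen.refl
      have hy₀ : y₀ ∉ C := hxy
      have hclosed : ∀ a b : V, a ∈ C → Γ.Adj a b → b ∈ C :=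
        fun a b ha hab => Relation.ReflTransGen.tail ha hab
      have hcard1 : Nat.card ↥C ≤ n := by
        have h1 : C ⊂ Set.univ := ⟨Set.subset_univ _, fun hsub => hy₀ (hsub (Set.mem_univ y₀))⟩
        have h2 := Set.ncard_lt_ncard h1 (Set.toFinite _)
        rw [Set.ncard_univ] at h2
        rw [Nat.card_coe_set_eq]
        omega
      have hcard2 : Nat.card ↥(Cᶜ) ≤ n := by
        have h1 : Cᶜ ⊂ Set.univ := ⟨Set.subset_univ _,
          fun hsub => (hsub (Set.mem_univ x₀)) hx₀⟩
        have h2 := Set.ncard_lt_ncard h1 (Set.toFinite _)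
        rw [Set.ncard_univ] at h2
        rw [Nat.card_coe_set_eq]
        omega
      have h1 := ih ↥C (Γ.induce C) hcard1 (LabeledGraph.not_poisonous_induce hp)
      have h2 := ih ↥(Cᶜ) (Γ.induce Cᶜ) hcard2 (LabeledGraph.not_poisonous_induce hp)
      refine InS.iso _ _ _ _ (Equiv.Set.sumCompl C) ?_ ?_ (InS.disjUnion _ _ _ _ h1 h2)
      · rintro (a | a) (b | b)
        · exact Iff.rfl
        · simp only [Equiv.Set.sumCompl_apply_inl, Equiv.Set.sumCompl_apply_inr]
          constructor
          · intro hadj; exact b.2 (hclosed _ _ a.2 hadj)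
          · intro hf; exact absurd hf id
        · simp only [Equiv.Set.sumCompl_apply_inl, Equiv.Set.sumCompl_apply_inr]
          constructor
          · intro hadj; exact a.2 (hclosed _ _ b.2 (Γ.symm _ _ hadj))
          · intro hf; exact absurd hf id
        · exact Iff.rfl
      · rintro (a | a) (b | b) hadj
        · exact rfl
        · exact absurd hadj id
        · exact absurd hadj id
        · exact rfl

theorem stmt_13 (V : Type u) [Finite V] (Γ : LabeledGraph V)
    (h : ¬ Γ.Poisonous) : InS V Γ :=
  main_aux (Nat.card V) V Γ le_rfl h
end

section
/- Let Γ be a finite simple labeled graph that is connected, has at least three vertices, and is not poisonous. Then there exists a vertex u of Γ that is joined by an edge labeled 2 to every other vertex of Γ. -/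
section Aux

variable {V : Type*} (Γ : LabeledGraph V)

lemma lg_adj2_symm {u v : V} (h : Γ.Adj2 u v) : Γ.Adj2 v u :=
  ⟨Γ.symm _ _ h.1, (Γ.label_symm v u).trans h.2⟩

lemma lg_adj2_ne {u v : V} (h : Γ.Adj2 u v) : u ≠ v := by
  rintro rfl; exact Γ.loopless u h.1

lemma lg_big_of_not2 {u v : V} (h : Γ.Adj u v) (h2 : ¬ Γ.Adj2 u v) : Γ.AdjBig u v := by
  refine ⟨h, ?_⟩
  have h1 := Γ.one_lt_label u v h
  have hne : Γ.label u v ≠ 2 := fun he => h2 ⟨h, he⟩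
  omega

lemma lg_triple (hp : ¬ Γ.Poisonous3) {a b c : V}
    (hab : a ≠ b) (hac : a ≠ c) (hbc : b ≠ c)
    (hc : (Γ.Adj a b ∧ Γ.Adj b c) ∨ (Γ.Adj a b ∧ Γ.Adj a c) ∨ (Γ.Adj a c ∧ Γ.Adj b c)) :
    (Γ.Adj2 a b ∧ Γ.Adj2 b c) ∨ (Γ.Adj2 a b ∧ Γ.Adj2 a c) ∨ (Γ.Adj2 a c ∧ Γ.Adj2 b c) := by
  by_contra hno
  exact hp ⟨a, b, c, hab, hac, hbc, hc,
    fun h => hno (Or.inl h), fun h => hno (Or.inr (Or.inl h)),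
    fun h => hno (Or.inr (Or.inr h))⟩

lemma lg_big_spread (hp : ¬ Γ.Poisonous3) {a b c : V} (hab : Γ.Adj a b)
    (hn2 : ¬ Γ.Adj2 a b) (hca : c ≠ a) (hcb : c ≠ b)
    (hadj : Γ.Adj a c ∨ Γ.Adj b c) : Γ.Adj2 a c ∧ Γ.Adj2 b c := by
  have hd : a ≠ b := fun h => Γ.loopless a (h ▸ hab)
  have ht := lg_triple Γ hp hd hca.symm hcb.symm (by
    rcases hadj with h | h
    · exact Or.inr (Or.inl ⟨hab, h⟩)
    · exact Or.inl ⟨hab, h⟩)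
  rcases ht with ⟨h1, _⟩ | ⟨h1, _⟩ | ⟨h1, h2⟩
  · exact absurd h1 hn2
  · exact absurd h1 hn2
  · exact ⟨h1, h2⟩

end Aux


/-- A labeled graph is connected if any two vertices are joined by a path. -/
def LabeledGraph.Connected {V : Type*} (Γ : LabeledGraph V) : Prop :=
  ∀ u v : V, Relation.ReflTransGen Γ.Adj u v

theorem stmt_14 (V : Type*) [Finite V] (Γ : LabeledGraph V)
    (hconn : Γ.Connected) (hcard : 3 ≤ Nat.card V) (hpois : ¬ Γ.Poisonous) :
    ∃ u : V, ∀ v : V, v ≠ u → Γ.Adj2 u v := by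
  classical
  letI := Fintype.ofFinite V
  have hp1 : ¬ Γ.Poisonous1 := fun h => hpois (Or.inl h)
  have hp2 : ¬ Γ.Poisonous2 := fun h => hpois (Or.inr (Or.inl h))
  have hp3 : ¬ Γ.Poisonous3 := fun h => hpois (Or.inr (Or.inr (Or.inl h)))
  have hp4 : ¬ Γ.Poisonous4 := fun h => hpois (Or.inr (Or.inr (Or.inr (Or.inl h))))
  have hp5 : ¬ Γ.Poisonous5 := fun h => hpois (Or.inr (Or.inr (Or.inr (Or.inr h))))
  have hcard' : 3 ≤ Fintype.card V := by rwa [Nat.card_eq_fintype_card] at hcard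
  -- there is always a third vertex
  have third : ∀ a b : V, ∃ c, c ≠ a ∧ c ≠ b := by
    intro a b
    have h2 : ({a, b} : Finset V).card ≤ 2 := by
      apply (Finset.card_insert_le _ _).trans; simp
    have hpos : 0 < (Finset.univ \ ({a, b} : Finset V)).card := by
      have := Finset.card_sdiff_of_subset (Finset.subset_univ ({a, b} : Finset V))
      rw [Finset.card_univ] at this
      omega
    obtain ⟨c, hc⟩ := Finset.card_pos.mp hpos
    simp only [Finset.mem_sdiff, Finset.mem_univ, Finset.mem_insert,
      Finset.mem_singleton, true_and] at hc
    push_neg at hc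
    exact ⟨c, hc⟩
  -- any edge is connected through label-2 edges
  have step : ∀ a b : V, Γ.Adj a b → Relation.ReflTransGen Γ.Adj2 a b := by
    intro a b hab
    by_cases h2 : Γ.Adj2 a b
    · exact Relation.ReflTransGen.single h2
    · obtain ⟨c0, hc0a, hc0b⟩ := third a b
      have key : ∀ v : V, Relation.ReflTransGen Γ.Adj a v →
          (v = a ∨ v = b) ∨ ∃ c, c ≠ a ∧ c ≠ b ∧ (Γ.Adj a c ∨ Γ.Adj b c) := by
        intro v hv
        induction hv with
        | refl => exact Or.inl (Or.inl rfl)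
        | @tail m w hp' hadj ih =>
          rcases ih with (hm | hm) | ⟨c, hc⟩
          · rw [hm] at hadj
            by_cases hwa : w = a
            · exact Or.inl (Or.inl hwa)
            · by_cases hwb : w = b
              · exact Or.inl (Or.inr hwb)
              · exact Or.inr ⟨w, hwa, hwb, Or.inl hadj⟩
          · rw [hm] at hadj
            by_cases hwa : w = a
            · exact Or.inl (Or.inl hwa)
            · by_cases hwb : w = b
              · exact Or.inl (Or.inr hwb)
              · exact Or.inr ⟨w, hwa, hwb, Or.inr hadj⟩
          · exact Or.inr ⟨c, hc⟩
      rcases key c0 (hconn a c0) with (h | h) | ⟨c, hca, hcb, hadj⟩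
      · exact absurd h hc0a
      · exact absurd h hc0b
      · obtain ⟨h1, h3⟩ := lg_big_spread Γ hp3 hab h2 hca hcb hadj
        exact (Relation.ReflTransGen.single h1).tail (lg_adj2_symm Γ h3)
  have conn2 : ∀ a b : V, Relation.ReflTransGen Γ.Adj2 a b := by
    intro a b
    have h := hconn a b
    induction h with
    | refl => exact Relation.ReflTransGen.refl
    | @tail m w hp' hadj ih => exact ih.trans (step m w hadj)
  -- distance two extraction
  have dist2 : ∀ u w : V, Relation.ReflTransGen Γ.Adj2 u w →
      w = u ∨ Γ.Adj2 u w ∨ ∃ x y, Γ.Adj2 u x ∧ Γ.Adj2 x y ∧ ¬ Γ.Adj2 u y ∧ y ≠ u := by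
    intro u w hw
    induction hw with
    | refl => exact Or.inl rfl
    | @tail m w hp' hadj ih =>
      rcases ih with rfl | h2 | ⟨x, y, hx⟩
      · exact Or.inr (Or.inl hadj)
      · by_cases hwu : w = u
        · exact Or.inl hwu
        · by_cases h3 : Γ.Adj2 u w
          · exact Or.inr (Or.inl h3)
          · exact Or.inr (Or.inr ⟨m, w, h2, hadj, h3, hwu⟩)
      · exact Or.inr (Or.inr ⟨x, y, hx⟩)
  by_contra hgoal
  push_neg at hgoal
  -- max degree vertex
  set deg : V → ℕ := fun t => (Finset.univ.filter (fun v => Γ.Adj2 t v)).card with hdeg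
  have huniv : (Finset.univ : Finset V).Nonempty := by
    apply Finset.card_pos.mp; rw [Finset.card_univ]; omega
  obtain ⟨u, -, hmax⟩ := Finset.exists_max_image Finset.univ deg huniv
  obtain ⟨w0, hw0u, hw0⟩ := hgoal u
  rcases dist2 u w0 (conn2 u w0) with h | h | ⟨x, w, hux, hxw, hnuw, hwu⟩
  · exact hw0u h
  · exact hw0 h
  have hxu : x ≠ u := (lg_adj2_ne Γ hux).symm
  have hxw' : x ≠ w := lg_adj2_ne Γ hxw
  -- find y adjacent-2 to u but not to x
  have hnall : ¬ ∀ y, Γ.Adj2 u y → y ≠ x → Γ.Adj2 x y := by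
    intro hall
    have hsub : insert u (insert w
        (Finset.univ.filter (fun v => Γ.Adj2 u v) \ {x})) ⊆
        Finset.univ.filter (fun v => Γ.Adj2 x v) := by
      intro z hz
      simp only [Finset.mem_insert, Finset.mem_sdiff, Finset.mem_filter,
        Finset.mem_univ, true_and, Finset.mem_singleton] at hz ⊢
      rcases hz with h | h | ⟨h1, h2⟩
      · subst h; exact lg_adj2_symm Γ hux
      · subst h; exact hxw
      · exact hall z h1 h2
    have hw_notin : w ∉ Finset.univ.filter (fun v => Γ.Adj2 u v) \ {x} := by
      simp only [Finset.mem_sdiff, Finset.mem_filter, Finset.mem_univ, true_and,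
        Finset.mem_singleton]
      intro h; exact hnuw h.1
    have hu_notin : u ∉ insert w
        (Finset.univ.filter (fun v => Γ.Adj2 u v) \ {x}) := by
      simp only [Finset.mem_insert, Finset.mem_sdiff, Finset.mem_filter,
        Finset.mem_univ, true_and, Finset.mem_singleton]
      rintro (h | ⟨h1, -⟩)
      · exact hwu h.symm
      · exact Γ.loopless u h1.1
    have hxmem : x ∈ Finset.univ.filter (fun v => Γ.Adj2 u v) := by
      simp only [Finset.mem_filter, Finset.mem_univ, true_and]; exact hux
    have hc1 : ({x} : Finset V) ⊆ Finset.univ.filter (fun v => Γ.Adj2 u v) := by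
      simpa using hxmem
    have hcsd : (Finset.univ.filter (fun v => Γ.Adj2 u v) \ {x}).card =
        deg u - 1 := by
      rw [Finset.card_sdiff_of_subset hc1, Finset.card_singleton]
    have hdegu1 : 1 ≤ deg u := Finset.card_pos.mpr ⟨x, hxmem⟩
    have hcard2 := Finset.card_le_card hsub
    rw [Finset.card_insert_of_notMem hu_notin,
      Finset.card_insert_of_notMem hw_notin, hcsd] at hcard2
    have hle := hmax x (Finset.mem_univ x)
    simp only [hdeg] at hcard2 hle hdegu1
    omega
  push_neg at hnall
  obtain ⟨y, huy, hyx, hnxy'⟩ := hnall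
  have hnxy : ¬ Γ.Adj2 x y := fun h => hnxy' h
  have hyu : y ≠ u := (lg_adj2_ne Γ huy).symm
  have hyw : y ≠ w := fun h => hnuw (h ▸ huy)
  have hwu2 : ¬ Γ.Adj2 w u := fun h => hnuw (lg_adj2_symm Γ h)
  have hyx2 : ¬ Γ.Adj2 y x := fun h => hnxy (lg_adj2_symm Γ h)
  by_cases hwy : Γ.Adj2 w y
  · -- square w x u y
    have e1 : Γ.Adj2 w x := lg_adj2_symm Γ hxw
    have e2 : Γ.Adj2 x u := lg_adj2_symm Γ hux
    have e3 : Γ.Adj2 u y := huy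
    have e4 : Γ.Adj2 y w := lg_adj2_symm Γ hwy
    by_cases h5 : Γ.Adj w u <;> by_cases h6 : Γ.Adj x y
    · exact hp5 ⟨w, x, u, y, hxw'.symm, hwu, hyw.symm,
        hxu, hyx.symm, hyu.symm, e1, e2, e3, e4,
        lg_big_of_not2 Γ h5 hwu2, lg_big_of_not2 Γ h6 hnxy⟩
    · exact hp4 ⟨w, x, u, y, hxw'.symm, hwu, hyw.symm,
        hxu, hyx.symm, hyu.symm, e1, e2, e3, e4,
        lg_big_of_not2 Γ h5 hwu2, h6⟩
    · exact hp4 ⟨x, u, y, w, hxu, hyx.symm, hxw', hyu.symm, hwu.symm, hyw,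
        e2, e3, e4, e1, lg_big_of_not2 Γ h6 hnxy, fun h => h5 (Γ.symm _ _ h)⟩
    · exact hp1 ⟨w, x, u, y, hxw'.symm, hwu, hyw.symm,
        hxu, hyx.symm, hyu.symm, e1, e2, e3, e4, h5, h6⟩
  · -- induced path
    have hwy2 : ¬ Γ.Adj2 y w := fun h => hwy (lg_adj2_symm Γ h)
    have hnAwu : ¬ Γ.Adj w u := by
      intro hA
      rcases lg_triple Γ hp3 hwu hyw.symm hyu.symm
        (Or.inl ⟨hA, huy.1⟩) with ⟨h, -⟩ | ⟨h, -⟩ | ⟨h, -⟩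
      · exact hwu2 h
      · exact hwu2 h
      · exact hwy h
    have hnAxy : ¬ Γ.Adj x y := by
      intro hA
      rcases lg_triple Γ hp3 hyx hyw hxw'
        (Or.inl ⟨Γ.symm _ _ hA, hxw.1⟩) with ⟨h, -⟩ | ⟨h, -⟩ | ⟨h, -⟩
      · exact hyx2 h
      · exact hyx2 h
      · exact hwy2 h
    have hnAwy : ¬ Γ.Adj w y := by
      intro hA
      rcases lg_triple Γ hp3 hyw.symm hwu hyu
        (Or.inl ⟨hA, Γ.symm _ _ huy.1⟩) with ⟨h, -⟩ | ⟨h, -⟩ | ⟨h, -⟩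
      · exact hwy h
      · exact hwy h
      · exact hwu2 h
    exact hp2 ⟨w, x, u, y, hxw'.symm, hwu, hyw.symm,
      hxu, hyx.symm, hyu.symm, lg_adj2_symm Γ hxw, lg_adj2_symm Γ hux, huy,
      hnAwu, hnAwy, hnAxy⟩
end

section
/- Let Γ be a finite simple labeled graph (edges labeled by integers > 1) that is not poisonous. Then Γ is chordal, i.e., Γ contains no induced cycle of length at least 4. -/
/-- A labeled graph is chordal if it has no induced cycle of length at least 4. -/
def LabeledGraph.Chordal {V : Type*} (Γ : LabeledGraph V) : Prop :=
  ¬ ∃ (n : ℕ) (f : ZMod n → V), 4 ≤ n ∧ Function.Injective f ∧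
      ∀ i j, Γ.Adj (f i) (f j) ↔ (j = i + 1 ∨ i = j + 1)

theorem stmt_15 (V : Type*) [Finite V] (Γ : LabeledGraph V)
    (h : ¬ Γ.Poisonous) : Γ.Chordal := by
  rintro ⟨n, f, hn, hinj, hadj⟩
  rw [LabeledGraph.Poisonous] at h
  push_neg at h
  obtain ⟨h1, h2, h3, h4, h5⟩ := h
  haveI : NeZero n := ⟨by omega⟩
  have hcast : ∀ a b : ℕ, a < n → b < n → (((a : ZMod n) = (b : ZMod n)) ↔ a = b) := by
    intro a b ha hb
    rw [ZMod.natCast_eq_natCast_iff, Nat.ModEq, Nat.mod_eq_of_lt ha, Nat.mod_eq_of_lt hb]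
  have h10 : (1 : ZMod n) ≠ 0 := by
    have := hcast 1 0 (by omega) (by omega); simpa using this.not.mpr (by omega)
  have h20 : (2 : ZMod n) ≠ 0 := by
    have := hcast 2 0 (by omega) (by omega); simpa using this.not.mpr (by omega)
  have h30 : (3 : ZMod n) ≠ 0 := by
    have := hcast 3 0 (by omega) (by omega); simpa using this.not.mpr (by omega)
  have h21 : (2 : ZMod n) ≠ 1 := by
    have := hcast 2 1 (by omega) (by omega); simpa using this.not.mpr (by omega)
  have h31 : (3 : ZMod n) ≠ 1 := by
    have := hcast 3 1 (by omega) (by omega); simpa using this.not.mpr (by omega)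
  have h32 : (3 : ZMod n) ≠ 2 := by
    have := hcast 3 2 (by omega) (by omega); simpa using this.not.mpr (by omega)
  -- every edge of the cycle is labeled 2
  have hedge : ∀ i : ZMod n, Γ.Adj2 (f i) (f (i + 1)) := by
    intro i
    have hab : Γ.Adj (f i) (f (i + 1)) := (hadj i (i + 1)).2 (Or.inl rfl)
    have hbc : Γ.Adj (f (i + 1)) (f (i + 1 + 1)) := (hadj _ _).2 (Or.inl rfl)
    have hac : ¬ Γ.Adj (f i) (f (i + 1 + 1)) := by
      rw [hadj]
      rintro (he | he)
      · exact h10 (by linear_combination he)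
      · exact h30 (by linear_combination -he)
    have hne1 : f i ≠ f (i + 1) := hinj.ne (by
      intro he; exact h10 (by linear_combination -he))
    have hne2 : f i ≠ f (i + 1 + 1) := hinj.ne (by
      intro he; exact h20 (by linear_combination -he))
    have hne3 : f (i + 1) ≠ f (i + 1 + 1) := hinj.ne (by
      intro he; exact h10 (by linear_combination -he))
    by_contra hcon
    apply h3
    refine ⟨f i, f (i + 1), f (i + 1 + 1), hne1, hne2, hne3, Or.inl ⟨hab, hbc⟩, ?_, ?_, ?_⟩
    · rintro ⟨hA, hB⟩
      -- both edges labeled 2; but then hedge holds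
      exact hcon hA
    · rintro ⟨-, hB⟩; exact hac hB.1
    · rintro ⟨hA, -⟩; exact hac hA.1
  -- case 1 requires both Adj2; if hcon holds then case 1 fails only via first conjunct.
  -- But we also need that not *both*: fine, hcon hA suffices.
  have e01 : Γ.Adj2 (f 0) (f 1) := by simpa using hedge 0
  have e12 : Γ.Adj2 (f 1) (f 2) := by
    have := hedge 1; norm_num at this ⊢; convert this using 3
  have e23 : Γ.Adj2 (f 2) (f 3) := by
    have := hedge 2; norm_num at this ⊢; convert this using 3
  have ne01 : f 0 ≠ f 1 := hinj.ne (by simpa using h10.symm)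
  have ne02 : f 0 ≠ f 2 := hinj.ne (by simpa using h20.symm)
  have ne03 : f 0 ≠ f 3 := hinj.ne (by simpa using h30.symm)
  have ne12 : f 1 ≠ f 2 := hinj.ne h21.symm
  have ne13 : f 1 ≠ f 3 := hinj.ne h31.symm
  have ne23 : f 2 ≠ f 3 := hinj.ne h32.symm
  have na02 : ¬ Γ.Adj (f 0) (f 2) := by
    rw [hadj]
    rintro (he | he)
    · exact h21 (by linear_combination he)
    · exact h30 (by linear_combination -he)
  have na13 : ¬ Γ.Adj (f 1) (f 3) := by
    rw [hadj]
    rintro (he | he)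
    · exact h32 (by linear_combination he)
    · exact h30 (by linear_combination -he)
  rcases eq_or_lt_of_le hn with h4eq | h5le
  · -- n = 4 : Poisonous1
    subst h4eq
    have e30 : Γ.Adj2 (f 3) (f 0) := by
      have := hedge 3
      have h34 : (3 : ZMod 4) + 1 = 0 := by decide
      rwa [h34] at this
    exact h1 ⟨f 0, f 1, f 2, f 3, ne01, ne02, ne03, ne12, ne13, ne23,
      e01, e12, e23, e30, na02, na13⟩
  · -- n ≥ 5 : Poisonous2
    have h40 : (4 : ZMod n) ≠ 0 := by
      have := hcast 4 0 (by omega) (by omega); simpa using this.not.mpr (by omega)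
    have h41 : (3 : ZMod n) + 1 ≠ 1 := by
      intro he; exact h30 (by linear_combination he)
    have na03 : ¬ Γ.Adj (f 0) (f 3) := by
      rw [hadj]
      rintro (he | he)
      · exact h31 (by linear_combination he)
      · exact h40 (by linear_combination -he)
    exact h2 ⟨f 0, f 1, f 2, f 3, ne01, ne02, ne03, ne12, ne13, ne23,
      e01, e12, e23, na02, na03, na13⟩
end

section
/- Let Γ be a finite simple labeled graph that is not poisonous. Then every complete induced subgraph of Γ on 3 or 4 vertices has at most one edge with label greater than 2. -/
/-- The complete induced subgraph on the (distinct) vertices `f 0, …, f (k-1)`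
has at most one edge with label greater than 2. -/
def LabeledGraph.AtMostOneBigEdge {V : Type*} (Γ : LabeledGraph V) {k : ℕ}
    (f : Fin k → V) : Prop :=
  ∀ i j i' j' : Fin k, i ≠ j → i' ≠ j' →
    2 < Γ.label (f i) (f j) → 2 < Γ.label (f i') (f j') →
    (i' = i ∧ j' = j) ∨ (i' = j ∧ j' = i)

/-- Two big edges sharing the middle vertex `y` give a Poisonous3 configuration. -/
lemma share_vertex {V : Type*} (Γ : LabeledGraph V) {x y z : V}
    (hxy : x ≠ y) (hxz : x ≠ z) (hyz : y ≠ z)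
    (Axy : Γ.Adj x y) (Ayz : Γ.Adj y z)
    (b1 : 2 < Γ.label x y) (b2 : 2 < Γ.label y z) : Γ.Poisonous3 := by
  refine ⟨x, y, z, hxy, hxz, hyz, Or.inl ⟨Axy, Ayz⟩, ?_, ?_, ?_⟩
  · rintro ⟨⟨_, h2⟩, _⟩; omega
  · rintro ⟨⟨_, h2⟩, _⟩; omega
  · rintro ⟨_, ⟨_, h2⟩⟩; omega

/-- In a triangle with one big edge, the other two edges are labeled 2. -/
lemma two_of_three {V : Type*} (Γ : LabeledGraph V) (h3 : ¬ Γ.Poisonous3) {a b c : V}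
    (hab : a ≠ b) (hac : a ≠ c) (hbc : b ≠ c)
    (Aab : Γ.Adj a b) (Abc : Γ.Adj b c)
    (hbig : 2 < Γ.label a b) : Γ.label a c = 2 ∧ Γ.label b c = 2 := by
  by_contra hcon
  apply h3
  refine ⟨a, b, c, hab, hac, hbc, Or.inl ⟨Aab, Abc⟩, ?_, ?_, ?_⟩
  · rintro ⟨⟨_, h2⟩, _⟩; omega
  · rintro ⟨⟨_, h2⟩, _⟩; omega
  · rintro ⟨⟨_, h2⟩, ⟨_, h2'⟩⟩; exact hcon ⟨h2, h2'⟩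

theorem stmt_16 (V : Type*) [Finite V] (Γ : LabeledGraph V)
    (h : ¬ Γ.Poisonous) :
    ∀ k : ℕ, (k = 3 ∨ k = 4) → ∀ f : Fin k → V, Function.Injective f →
      (∀ i j, i ≠ j → Γ.Adj (f i) (f j)) → Γ.AtMostOneBigEdge f := by
  intro k _ f hinj hadj i j i' j' hij hij' hb hb'
  have h3 : ¬ Γ.Poisonous3 := fun p => h (Or.inr (Or.inr (Or.inl p)))
  have h5 : ¬ Γ.Poisonous5 := fun p => h (Or.inr (Or.inr (Or.inr (Or.inr p))))
  by_contra hc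
  push_neg at hc
  have ne : ∀ {p q : Fin k}, p ≠ q → f p ≠ f q := fun hpq => fun e => hpq (hinj e)
  have lsymm := Γ.label_symm
  by_cases e1 : i' = i
  · subst e1
    have hj : j' ≠ j := hc.1 rfl
    exact h3 (share_vertex Γ (ne hij.symm) (ne hj.symm) (ne hij')
      (hadj j i' hij.symm) (hadj i' j' hij')
      (by rw [lsymm]; exact hb) hb')
  by_cases e2 : i' = j
  · subst e2
    have hj : j' ≠ i := hc.2 rfl
    exact h3 (share_vertex Γ (ne hij) (ne (Ne.symm hj)) (ne hij')
      (hadj i i' hij) (hadj i' j' hij') hb hb')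
  by_cases e3 : j' = i
  · subst e3
    exact h3 (share_vertex Γ (ne hij.symm) (ne (Ne.symm e2)) (ne (Ne.symm e1))
      (hadj j j' hij.symm) (hadj j' i' (Ne.symm hij'))
      (by rw [lsymm]; exact hb) (by rw [lsymm]; exact hb'))
  by_cases e4 : j' = j
  · subst e4
    exact h3 (share_vertex Γ (ne hij) (ne (Ne.symm e1)) (ne (Ne.symm e2))
      (hadj i j' hij) (hadj j' i' (Ne.symm hij'))
      hb (by rw [lsymm]; exact hb'))
  · -- disjoint big edges: vertices a b c d all distinct
    set a := f i; set b := f j; set c := f i'; set d := f j'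
    have hab : a ≠ b := ne hij
    have hac : a ≠ c := ne (Ne.symm e1)
    have had : a ≠ d := ne (Ne.symm e3)
    have hbc : b ≠ c := ne (Ne.symm e2)
    have hbd : b ≠ d := ne (Ne.symm e4)
    have hcd : c ≠ d := ne hij'
    have Aac : Γ.Adj a c := hadj i i' (Ne.symm e1)
    have Abc : Γ.Adj b c := hadj j i' (Ne.symm e2)
    have Aad : Γ.Adj a d := hadj i j' (Ne.symm e3)
    have Abd : Γ.Adj b d := hadj j j' (Ne.symm e4)
    obtain ⟨lac, lbc⟩ := two_of_three Γ h3 hab hac hbc (hadj i j hij) Abc hb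
    obtain ⟨lad, lbd⟩ := two_of_three Γ h3 hab had hbd (hadj i j hij) Abd hb
    apply h5
    refine ⟨a, c, b, d, hac, hab, had, hbc.symm, hcd, hbd,
      ⟨Aac, lac⟩, ⟨Γ.symm _ _ Abc, by rw [lsymm]; exact lbc⟩,
      ⟨Abd, lbd⟩, ⟨Γ.symm _ _ Aad, by rw [lsymm]; exact lad⟩,
      ⟨hadj i j hij, hb⟩, ⟨hadj i' j' hij', hb'⟩⟩
end

section
/- Let Γ be a finite simple labeled graph. Then Γ is not poisonous if and only if Γ is chordal, every complete induced subgraph of Γ on 3 or 4 vertices has at most one edge labeled > 2, Γ contains no induced 4-cycle-with-one-diagonal where the four cycle edges are labeled 2 and the diagonal is labeled m > 2, and every non-closed full induced path in Γ of length greater than 1 has length exactly 2 with both edges labeled 2. -/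
/-- `f` is a non-closed full induced path of length `n` in `Γ`. -/
def LabeledGraph.IsInducedPath {V : Type*} (Γ : LabeledGraph V) {n : ℕ}
    (f : Fin (n + 1) → V) : Prop :=
  Function.Injective f ∧
    ∀ i j : Fin (n + 1), Γ.Adj (f i) (f j) ↔ ((i : ℕ) + 1 = j ∨ (j : ℕ) + 1 = i)

/-- Every non-closed full induced path of length greater than 1 has length
exactly 2 with both edges labeled 2. -/
def LabeledGraph.GoodPaths {V : Type*} (Γ : LabeledGraph V) : Prop :=
  ∀ (n : ℕ), 1 < n → ∀ f : Fin (n + 1) → V, Γ.IsInducedPath f →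
    n = 2 ∧ ∀ i j : Fin (n + 1), (i : ℕ) + 1 = j → Γ.label (f i) (f j) = 2

/-- Every complete induced subgraph of `Γ` on 3 or 4 vertices has at most one
edge labeled greater than 2. -/
def LabeledGraph.Complete34Cond {V : Type*} (Γ : LabeledGraph V) : Prop :=
  ∀ k : ℕ, (k = 3 ∨ k = 4) → ∀ f : Fin k → V, Function.Injective f →
    (∀ i j, i ≠ j → Γ.Adj (f i) (f j)) →
    ∀ i j i' j' : Fin k, i ≠ j → i' ≠ j' →
      2 < Γ.label (f i) (f j) → 2 < Γ.label (f i') (f j') →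
      (i' = i ∧ j' = j) ∨ (i' = j ∧ j' = i)

namespace LabeledGraph

variable {V : Type*} (Γ : LabeledGraph V)

lemma adj2_of_inducedPath3 (h3 : ¬ Γ.Poisonous3) {a b c : V}
    (hab : a ≠ b) (hac : a ≠ c) (hbc : b ≠ c)
    (h1 : Γ.Adj a b) (h2 : Γ.Adj b c) (hn : ¬ Γ.Adj a c) :
    Γ.Adj2 a b ∧ Γ.Adj2 b c := by
  by_contra h
  exact h3 ⟨a, b, c, hab, hac, hbc, Or.inl ⟨h1, h2⟩, h,
    fun hh => hn hh.2.1, fun hh => hn hh.1.1⟩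

lemma two_big_triangle (h3 : ¬ Γ.Poisonous3) {x y z : V}
    (hxy : x ≠ y) (hxz : x ≠ z) (hyz : y ≠ z)
    (axy : Γ.Adj x y) (axz : Γ.Adj x z) (_ayz : Γ.Adj y z)
    (bxy : 2 < Γ.label x y) (bxz : 2 < Γ.label x z) : False := by
  apply h3
  refine ⟨y, x, z, fun h => hxy h.symm, hyz, hxz,
    Or.inl ⟨Γ.symm _ _ axy, axz⟩, ?_, ?_, ?_⟩
  · rintro ⟨⟨-, h⟩, -⟩; rw [Γ.label_symm] at h; omega
  · rintro ⟨⟨-, h⟩, -⟩; rw [Γ.label_symm] at h; omega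
  · rintro ⟨-, -, h⟩; omega

lemma path_edge_two (h3 : ¬ Γ.Poisonous3) {n : ℕ} (hn : 2 ≤ n)
    {f : Fin (n + 1) → V} (hf : Γ.IsInducedPath f) :
    ∀ i j : Fin (n + 1), (i : ℕ) + 1 = (j : ℕ) → Γ.Adj2 (f i) (f j) := by
  obtain ⟨hinj, hadj⟩ := hf
  intro i j hij
  have hjn : (j : ℕ) ≤ n := by omega
  by_cases h : (i : ℕ) + 2 ≤ n
  · set k : Fin (n + 1) := ⟨(i : ℕ) + 2, by omega⟩ with hk
    have h1 : Γ.Adj (f i) (f j) := (hadj i j).2 (Or.inl hij)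
    have h2 : Γ.Adj (f j) (f k) := (hadj j k).2 (Or.inl (by simp [hk] <;> omega))
    have h4 : ¬ Γ.Adj (f i) (f k) := fun hc => by
      rcases (hadj i k).1 hc with h' | h' <;> simp [hk] at h' <;> omega
    exact (Γ.adj2_of_inducedPath3 h3 (hinj.ne (Fin.ne_of_val_ne (by omega)))
      (hinj.ne (Fin.ne_of_val_ne (by simp [hk] <;> omega)))
      (hinj.ne (Fin.ne_of_val_ne (by simp [hk] <;> omega))) h1 h2 h4).1
  · set k : Fin (n + 1) := ⟨(i : ℕ) - 1, by omega⟩ with hk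
    have h1 : Γ.Adj (f k) (f i) := (hadj k i).2 (Or.inl (by simp [hk] <;> omega))
    have h2 : Γ.Adj (f i) (f j) := (hadj i j).2 (Or.inl hij)
    have h4 : ¬ Γ.Adj (f k) (f j) := fun hc => by
      rcases (hadj k j).1 hc with h' | h' <;> simp [hk] at h' <;> omega
    exact (Γ.adj2_of_inducedPath3 h3 (hinj.ne (Fin.ne_of_val_ne (by simp [hk] <;> omega)))
      (hinj.ne (Fin.ne_of_val_ne (by simp [hk] <;> omega)))
      (hinj.ne (Fin.ne_of_val_ne (by omega))) h1 h2 h4).2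

lemma no_path3 (h2 : ¬ Γ.Poisonous2) (h3 : ¬ Γ.Poisonous3)
    {f : Fin 4 → V} (hf : Γ.IsInducedPath (n := 3) f) : False := by
  obtain ⟨hinj, hadj⟩ := hf
  have e01 := Γ.path_edge_two h3 (by omega) ⟨hinj, hadj⟩ 0 1 rfl
  have e12 := Γ.path_edge_two h3 (by omega) ⟨hinj, hadj⟩ 1 2 rfl
  have e23 := Γ.path_edge_two h3 (by omega) ⟨hinj, hadj⟩ 2 3 rfl
  refine h2 ⟨f 0, f 1, f 2, f 3, hinj.ne (by decide), hinj.ne (by decide),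
    hinj.ne (by decide), hinj.ne (by decide), hinj.ne (by decide),
    hinj.ne (by decide), e01, e12, e23, ?_, ?_, ?_⟩
  · exact fun hc => absurd ((hadj 0 2).1 hc) (by decide)
  · exact fun hc => absurd ((hadj 0 3).1 hc) (by decide)
  · exact fun hc => absurd ((hadj 1 3).1 hc) (by decide)

end LabeledGraph

theorem stmt_17 (V : Type*) [Finite V] (Γ : LabeledGraph V) :
    ¬ Γ.Poisonous ↔
      (Γ.Chordal ∧ Γ.Complete34Cond ∧ ¬ Γ.Poisonous4 ∧ Γ.GoodPaths) := by
  constructor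
  · intro hP
    have hP1 : ¬ Γ.Poisonous1 := fun h => hP (Or.inl h)
    have hP2 : ¬ Γ.Poisonous2 := fun h => hP (Or.inr (Or.inl h))
    have hP3 : ¬ Γ.Poisonous3 := fun h => hP (Or.inr (Or.inr (Or.inl h)))
    have hP4 : ¬ Γ.Poisonous4 := fun h => hP (Or.inr (Or.inr (Or.inr (Or.inl h))))
    have hP5 : ¬ Γ.Poisonous5 := fun h => hP (Or.inr (Or.inr (Or.inr (Or.inr h))))
    refine ⟨?_, ?_, hP4, ?_⟩
    · -- Chordal
      rintro ⟨n, f, hn4, hinj, hadj⟩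
      rcases eq_or_lt_of_le hn4 with h4 | h5
      · -- n = 4
        subst h4
        have a01 : Γ.Adj (f 0) (f 1) := (hadj 0 1).2 (by decide)
        have a12 : Γ.Adj (f 1) (f 2) := (hadj 1 2).2 (by decide)
        have a23 : Γ.Adj (f 2) (f 3) := (hadj 2 3).2 (by decide)
        have a30 : Γ.Adj (f 3) (f 0) := (hadj 3 0).2 (by decide)
        have n02 : ¬ Γ.Adj (f 0) (f 2) := fun h => absurd ((hadj 0 2).1 h) (by decide)
        have n13 : ¬ Γ.Adj (f 1) (f 3) := fun h => absurd ((hadj 1 3).1 h) (by decide)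
        have n20 : ¬ Γ.Adj (f 2) (f 0) := fun h => absurd ((hadj 2 0).1 h) (by decide)
        have t1 := Γ.adj2_of_inducedPath3 hP3 (hinj.ne (by decide)) (hinj.ne (by decide))
          (hinj.ne (by decide)) a01 a12 n02
        have t2 := Γ.adj2_of_inducedPath3 hP3 (hinj.ne (by decide)) (hinj.ne (by decide))
          (hinj.ne (by decide)) a23 a30 n20
        exact hP1 ⟨f 0, f 1, f 2, f 3, hinj.ne (by decide), hinj.ne (by decide),
          hinj.ne (by decide), hinj.ne (by decide), hinj.ne (by decide),
          hinj.ne (by decide), t1.1, t1.2, t2.1, t2.2, n02, n13⟩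
      · -- n ≥ 5
        haveI : NeZero n := ⟨by omega⟩
        have key : ∀ a b : ℕ, a < n → b < n → (((a : ℕ) : ZMod n) = ((b : ℕ) : ZMod n) ↔ a = b) := by
          intro a b ha hb
          constructor
          · intro h
            have := congrArg ZMod.val h
            rwa [ZMod.val_cast_of_lt ha, ZMod.val_cast_of_lt hb] at this
          · rintro rfl; rfl
        apply Γ.no_path3 hP2 hP3 (f := fun m : Fin 4 => f (((m : ℕ) : ℕ) : ZMod n))
        constructor
        · intro x y hxy
          have h1 : (((x : ℕ) : ℕ) : ZMod n) = (((y : ℕ) : ℕ) : ZMod n) := hinj hxy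
          exact Fin.ext ((key _ _ (x.isLt.trans_le (by omega)) (y.isLt.trans_le (by omega))).1 h1)
        · intro x y
          rw [hadj]
          have e1 : ((x : ℕ) : ZMod n) + 1 = (((x : ℕ) + 1 : ℕ) : ZMod n) := by push_cast; ring
          have e2 : ((y : ℕ) : ZMod n) + 1 = (((y : ℕ) + 1 : ℕ) : ZMod n) := by push_cast; ring
          rw [e1, e2, key _ _ (y.isLt.trans_le (by omega)) (by omega),
            key _ _ (x.isLt.trans_le (by omega)) (by omega)]
          omega
    · -- Complete34Cond
      intro k hk f hinj hcomp i j i' j' hij hij' hbig hbig'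
      by_contra hcon
      push_neg at hcon
      by_cases h1 : i' = i
      · subst h1
        have hjj' : j ≠ j' := fun e => hcon.1 rfl e.symm
        exact Γ.two_big_triangle hP3 (hinj.ne hij) (hinj.ne hij') (hinj.ne hjj')
          (hcomp _ _ hij) (hcomp _ _ hij') (hcomp _ _ hjj') hbig hbig'
      · by_cases h2 : i' = j
        · subst h2
          have hj'i : j' ≠ i := hcon.2 rfl
          rw [Γ.label_symm] at hbig
          exact Γ.two_big_triangle hP3 (hinj.ne (Ne.symm hij)) (hinj.ne hij')
            (hinj.ne (Ne.symm hj'i)) (hcomp _ _ (Ne.symm hij)) (hcomp _ _ hij')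
            (hcomp _ _ (Ne.symm hj'i)) hbig hbig'
        · by_cases h3 : j' = i
          · subst h3
            rw [Γ.label_symm] at hbig'
            exact Γ.two_big_triangle hP3 (hinj.ne hij) (hinj.ne (Ne.symm hij'))
              (hinj.ne (fun e => h2 e.symm)) (hcomp _ _ hij) (hcomp _ _ (Ne.symm hij'))
              (hcomp _ _ (fun e => h2 e.symm)) hbig hbig'
          · by_cases h4 : j' = j
            · subst h4
              rw [Γ.label_symm] at hbig hbig'
              exact Γ.two_big_triangle hP3 (hinj.ne (Ne.symm hij)) (hinj.ne (Ne.symm hij'))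
                (hinj.ne (fun e => h1 e.symm)) (hcomp _ _ (Ne.symm hij))
                (hcomp _ _ (Ne.symm hij')) (hcomp _ _ (fun e => h1 e.symm)) hbig hbig'
            · -- all four indices distinct
              have lab : ∀ u v : Fin k, u ≠ v →
                  Γ.label (f u) (f v) = 2 ∨ 2 < Γ.label (f u) (f v) := fun u v h => by
                have := Γ.one_lt_label _ _ (hcomp u v h); omega
              rcases lab i i' (Ne.symm h1) with hii' | hii'
              · rcases lab i j' (Ne.symm h3) with hij'2 | hij'2
                · rcases lab j i' (Ne.symm h2) with hji' | hji'
                  · rcases lab j j' (Ne.symm h4) with hjj'2 | hjj'2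
                    · -- Poisonous5
                      apply hP5
                      refine ⟨f i, f i', f j, f j', hinj.ne (Ne.symm h1), hinj.ne hij,
                        hinj.ne (Ne.symm h3), hinj.ne h2, hinj.ne hij',
                        hinj.ne (Ne.symm h4),
                        ⟨hcomp _ _ (Ne.symm h1), hii'⟩,
                        ⟨hcomp _ _ h2, by rw [Γ.label_symm]; exact hji'⟩,
                        ⟨hcomp _ _ (Ne.symm h4), hjj'2⟩,
                        ⟨hcomp _ _ h3, by rw [Γ.label_symm]; exact hij'2⟩,
                        ⟨hcomp _ _ hij, hbig⟩, ⟨hcomp _ _ hij', hbig'⟩⟩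
                    · rw [Γ.label_symm] at hbig
                      exact Γ.two_big_triangle hP3 (hinj.ne (Ne.symm hij))
                        (hinj.ne (Ne.symm h4)) (hinj.ne (Ne.symm h3))
                        (hcomp _ _ (Ne.symm hij)) (hcomp _ _ (Ne.symm h4))
                        (hcomp _ _ (Ne.symm h3)) hbig hjj'2
                  · rw [Γ.label_symm] at hbig
                    exact Γ.two_big_triangle hP3 (hinj.ne (Ne.symm hij))
                      (hinj.ne (Ne.symm h2)) (hinj.ne (Ne.symm h1))
                      (hcomp _ _ (Ne.symm hij)) (hcomp _ _ (Ne.symm h2))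
                      (hcomp _ _ (Ne.symm h1)) hbig hji'
                · exact Γ.two_big_triangle hP3 (hinj.ne hij) (hinj.ne (Ne.symm h3))
                    (hinj.ne (Ne.symm h4)) (hcomp _ _ hij) (hcomp _ _ (Ne.symm h3))
                    (hcomp _ _ (Ne.symm h4)) hbig hij'2
              · exact Γ.two_big_triangle hP3 (hinj.ne hij) (hinj.ne (Ne.symm h1))
                  (hinj.ne (Ne.symm h2)) (hcomp _ _ hij) (hcomp _ _ (Ne.symm h1))
                  (hcomp _ _ (Ne.symm h2)) hbig hii'
    · -- GoodPaths
      intro n hn f hf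
      have hn2 : n = 2 := by
        by_contra hne
        have h3le : 3 ≤ n := by omega
        apply Γ.no_path3 hP2 hP3 (f := fun m : Fin 4 => f ⟨(m : ℕ), m.isLt.trans_le (by omega)⟩)
        constructor
        · intro x y hxy
          have := hf.1 hxy
          exact Fin.ext (by simpa using congrArg Fin.val this)
        · intro x y
          exact hf.2 _ _
      subst hn2
      exact ⟨rfl, fun i j hij => (Γ.path_edge_two hP3 le_rfl hf i j hij).2⟩
  · rintro ⟨hch, hc34, hp4, hgood⟩
    have hall4 : ∀ z : Fin 4, z = 0 ∨ z = 1 ∨ z = 2 ∨ z = 3 := by decide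
    have hall3 : ∀ z : Fin 3, z = 0 ∨ z = 1 ∨ z = 2 := by decide
    have hallZ : ∀ z : ZMod 4, z = 0 ∨ z = 1 ∨ z = 2 ∨ z = 3 := by decide
    rintro (⟨a,b,c,d,hab,hac,had,hbc,hbd,hcd,e1,e2,e3,e4,n1,n2⟩ |
            ⟨a,b,c,d,hab,hac,had,hbc,hbd,hcd,e1,e2,e3,n1,n2,n3⟩ |
            ⟨a,b,c,hab,hac,hbc,hconn,h1,h2,h3⟩ |
            h4 | ⟨a,b,c,d,hab,hac,had,hbc,hbd,hcd,e1,e2,e3,e4,big1,big2⟩)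
    · -- Poisonous1 contradicts Chordal
      apply hch
      set f : ZMod 4 → V := ![a, b, c, d] with hfdef
      have f0 : f 0 = a := rfl
      have f1 : f 1 = b := rfl
      have f2 : f 2 = c := rfl
      have f3 : f 3 = d := rfl
      have A1 : Γ.Adj a b := e1.1
      have A1' : Γ.Adj b a := Γ.symm _ _ e1.1
      have A2 : Γ.Adj b c := e2.1
      have A2' : Γ.Adj c b := Γ.symm _ _ e2.1
      have A3 : Γ.Adj c d := e3.1
      have A3' : Γ.Adj d c := Γ.symm _ _ e3.1
      have A4 : Γ.Adj d a := e4.1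
      have A4' : Γ.Adj a d := Γ.symm _ _ e4.1
      have N1 : ¬ Γ.Adj a c := n1
      have N1' : ¬ Γ.Adj c a := fun h => n1 (Γ.symm _ _ h)
      have N2 : ¬ Γ.Adj b d := n2
      have N2' : ¬ Γ.Adj d b := fun h => n2 (Γ.symm _ _ h)
      refine ⟨4, f, by norm_num, ?_, ?_⟩
      · intro x y hxy
        rcases hallZ x with rfl|rfl|rfl|rfl <;> rcases hallZ y with rfl|rfl|rfl|rfl <;>
          simp only [f0, f1, f2, f3] at hxy ⊢ <;>
          first
            | rfl
            | exact absurd hxy (by assumption)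
            | exact absurd hxy.symm (by assumption)
      · intro x y
        rcases hallZ x with rfl|rfl|rfl|rfl <;> rcases hallZ y with rfl|rfl|rfl|rfl <;>
          simp only [f0, f1, f2, f3] <;>
          first
            | exact iff_of_false (Γ.loopless _) (by decide)
            | exact iff_of_true (by assumption) (by decide)
            | exact iff_of_false (by assumption) (by decide)
    · -- Poisonous2 contradicts GoodPaths
      set f : Fin 4 → V := ![a, b, c, d] with hfdef
      have f0 : f 0 = a := rfl
      have f1 : f 1 = b := rfl
      have f2 : f 2 = c := rfl
      have f3 : f 3 = d := rfl
      have A1 : Γ.Adj a b := e1.1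
      have A1' : Γ.Adj b a := Γ.symm _ _ e1.1
      have A2 : Γ.Adj b c := e2.1
      have A2' : Γ.Adj c b := Γ.symm _ _ e2.1
      have A3 : Γ.Adj c d := e3.1
      have A3' : Γ.Adj d c := Γ.symm _ _ e3.1
      have N1 : ¬ Γ.Adj a c := n1
      have N1' : ¬ Γ.Adj c a := fun h => n1 (Γ.symm _ _ h)
      have N2 : ¬ Γ.Adj a d := n2
      have N2' : ¬ Γ.Adj d a := fun h => n2 (Γ.symm _ _ h)
      have N3 : ¬ Γ.Adj b d := n3
      have N3' : ¬ Γ.Adj d b := fun h => n3 (Γ.symm _ _ h)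
      have hpath : Γ.IsInducedPath (n := 3) f := by
        constructor
        · intro x y hxy
          rcases hall4 x with rfl|rfl|rfl|rfl <;> rcases hall4 y with rfl|rfl|rfl|rfl <;>
            simp only [f0, f1, f2, f3] at hxy ⊢ <;>
            first
              | rfl
              | exact absurd hxy (by assumption)
              | exact absurd hxy.symm (by assumption)
        · intro x y
          rcases hall4 x with rfl|rfl|rfl|rfl <;> rcases hall4 y with rfl|rfl|rfl|rfl <;>
            simp only [f0, f1, f2, f3] <;>
            first
              | exact iff_of_false (Γ.loopless _) (by decide)
              | exact iff_of_true (by assumption) (by decide)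
              | exact iff_of_false (by assumption) (by decide)
      have := (hgood 3 (by omega) f hpath).1
      omega
    · -- Poisonous3
      have tri : ∀ x y z : V, x ≠ y → x ≠ z → y ≠ z → Γ.Adj x y → Γ.Adj x z → Γ.Adj y z →
          2 < Γ.label x y → 2 < Γ.label x z → False := by
        intro x y z hxy hxz hyz axy axz ayz bxy bxz
        have axy' : Γ.Adj y x := Γ.symm _ _ axy
        have axz' : Γ.Adj z x := Γ.symm _ _ axz
        have ayz' : Γ.Adj z y := Γ.symm _ _ ayz
        set f : Fin 3 → V := ![x, y, z] with hfdef
        have f0 : f 0 = x := rfl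
        have f1 : f 1 = y := rfl
        have f2 : f 2 = z := rfl
        have hinj : Function.Injective f := by
          intro u v huv
          rcases hall3 u with rfl|rfl|rfl <;> rcases hall3 v with rfl|rfl|rfl <;>
            simp only [f0, f1, f2] at huv ⊢ <;>
            first
              | rfl
              | exact absurd huv (by assumption)
              | exact absurd huv.symm (by assumption)
        have hcm : ∀ u v : Fin 3, u ≠ v → Γ.Adj (f u) (f v) := by
          intro u v huv
          rcases hall3 u with rfl|rfl|rfl <;> rcases hall3 v with rfl|rfl|rfl <;>
            simp only [f0, f1, f2] <;>
            first
              | exact absurd rfl huv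
              | assumption
        have := hc34 3 (Or.inl rfl) f hinj hcm 0 1 0 2 (by decide) (by decide)
          (by rw [f0, f1]; exact bxy) (by rw [f0, f2]; exact bxz)
        rcases this with ⟨-, h⟩ | ⟨h, -⟩ <;> exact absurd h (by decide)
      have tricase : Γ.Adj a b → Γ.Adj b c → Γ.Adj a c → False := by
        intro u1 u2 u3
        by_cases lab : Γ.label a b = 2
        · have hbc2 : 2 < Γ.label b c := by
            have := Γ.one_lt_label _ _ u2
            rcases Nat.lt_or_ge 2 (Γ.label b c) with h | h
            · exact h
            · exact absurd ⟨⟨u1, lab⟩, ⟨u2, by omega⟩⟩ h1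
          have hac2 : 2 < Γ.label a c := by
            have := Γ.one_lt_label _ _ u3
            rcases Nat.lt_or_ge 2 (Γ.label a c) with h | h
            · exact h
            · exact absurd ⟨⟨u1, lab⟩, ⟨u3, by omega⟩⟩ h2
          exact tri c a b (Ne.symm hac) (Ne.symm hbc) hab
            (Γ.symm _ _ u3) (Γ.symm _ _ u2) u1
            (by rw [Γ.label_symm] at hac2; exact hac2)
            (by rw [Γ.label_symm] at hbc2; exact hbc2)
        · have hab2 : 2 < Γ.label a b := by have := Γ.one_lt_label _ _ u1; omega
          by_cases lbc : Γ.label b c = 2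
          · have hac2 : 2 < Γ.label a c := by
              have := Γ.one_lt_label _ _ u3
              rcases Nat.lt_or_ge 2 (Γ.label a c) with h | h
              · exact h
              · exact absurd ⟨⟨u3, by omega⟩, ⟨u2, lbc⟩⟩ h3
            exact tri a b c hab hac hbc u1 u3 u2 hab2 hac2
          · have hbc2 : 2 < Γ.label b c := by have := Γ.one_lt_label _ _ u2; omega
            exact tri b a c (Ne.symm hab) hbc hac (Γ.symm _ _ u1) u2 u3
              (by rw [Γ.label_symm] at hab2; exact hab2) hbc2
      have pathcase : ∀ x y z : V, x ≠ y → x ≠ z → y ≠ z → Γ.Adj x y → Γ.Adj y z →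
          ¬ Γ.Adj x z → Γ.label x y = 2 ∧ Γ.label y z = 2 := by
        intro x y z hxy hxz hyz axy ayz nxz
        have axy' : Γ.Adj y x := Γ.symm _ _ axy
        have ayz' : Γ.Adj z y := Γ.symm _ _ ayz
        have nxz' : ¬ Γ.Adj z x := fun h => nxz (Γ.symm _ _ h)
        set f : Fin 3 → V := ![x, y, z] with hfdef
        have f0 : f 0 = x := rfl
        have f1 : f 1 = y := rfl
        have f2 : f 2 = z := rfl
        have hpath : Γ.IsInducedPath (n := 2) f := by
          constructor
          · intro u v huv
            rcases hall3 u with rfl|rfl|rfl <;> rcases hall3 v with rfl|rfl|rfl <;>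
              simp only [f0, f1, f2] at huv ⊢ <;>
              first
                | rfl
                | exact absurd huv (by assumption)
                | exact absurd huv.symm (by assumption)
          · intro u v
            rcases hall3 u with rfl|rfl|rfl <;> rcases hall3 v with rfl|rfl|rfl <;>
              simp only [f0, f1, f2] <;>
              first
                | exact iff_of_false (Γ.loopless _) (by decide)
                | exact iff_of_true (by assumption) (by decide)
                | exact iff_of_false (by assumption) (by decide)
        have hlab := (hgood 2 (by omega) f hpath).2
        have l01 := hlab 0 1 (by decide)
        have l12 := hlab 1 2 (by decide)
        rw [f0, f1] at l01
        rw [f1, f2] at l12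
        exact ⟨l01, l12⟩
      rcases hconn with ⟨u1, u2⟩ | ⟨u1, u2⟩ | ⟨u1, u2⟩
      · by_cases hx : Γ.Adj a c
        · exact tricase u1 u2 hx
        · obtain ⟨l1, l2⟩ := pathcase a b c hab hac hbc u1 u2 hx
          exact h1 ⟨⟨u1, l1⟩, ⟨u2, l2⟩⟩
      · by_cases hx : Γ.Adj b c
        · exact tricase u1 hx u2
        · obtain ⟨l1, l2⟩ := pathcase b a c (Ne.symm hab) hbc hac (Γ.symm _ _ u1) u2 hx
          exact h2 ⟨⟨u1, by rw [Γ.label_symm]; exact l1⟩, ⟨u2, l2⟩⟩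
      · by_cases hx : Γ.Adj a b
        · exact tricase hx u2 u1
        · obtain ⟨l1, l2⟩ := pathcase a c b hac hab (Ne.symm hbc) u1 (Γ.symm _ _ u2) hx
          exact h3 ⟨⟨u1, l1⟩, ⟨u2, by rw [Γ.label_symm]; exact l2⟩⟩
    · exact hp4 h4
    · -- Poisonous5 contradicts Complete34Cond
      set f : Fin 4 → V := ![a, b, c, d] with hfdef
      have f0 : f 0 = a := rfl
      have f1 : f 1 = b := rfl
      have f2 : f 2 = c := rfl
      have f3 : f 3 = d := rfl
      have A1 : Γ.Adj a b := e1.1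
      have A1' : Γ.Adj b a := Γ.symm _ _ e1.1
      have A2 : Γ.Adj b c := e2.1
      have A2' : Γ.Adj c b := Γ.symm _ _ e2.1
      have A3 : Γ.Adj c d := e3.1
      have A3' : Γ.Adj d c := Γ.symm _ _ e3.1
      have A4 : Γ.Adj d a := e4.1
      have A4' : Γ.Adj a d := Γ.symm _ _ e4.1
      have A5 : Γ.Adj a c := big1.1
      have A5' : Γ.Adj c a := Γ.symm _ _ big1.1
      have A6 : Γ.Adj b d := big2.1
      have A6' : Γ.Adj d b := Γ.symm _ _ big2.1
      have hinj : Function.Injective f := by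
        intro u v huv
        rcases hall4 u with rfl|rfl|rfl|rfl <;> rcases hall4 v with rfl|rfl|rfl|rfl <;>
          simp only [f0, f1, f2, f3] at huv ⊢ <;>
          first
            | rfl
            | exact absurd huv (by assumption)
            | exact absurd huv.symm (by assumption)
      have hcm : ∀ u v : Fin 4, u ≠ v → Γ.Adj (f u) (f v) := by
        intro u v huv
        rcases hall4 u with rfl|rfl|rfl|rfl <;> rcases hall4 v with rfl|rfl|rfl|rfl <;>
          simp only [f0, f1, f2, f3] <;>
          first
            | exact absurd rfl huv
            | assumption
      have := hc34 4 (Or.inr rfl) f hinj hcm 0 2 1 3 (by decide) (by decide)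
        (by rw [f0, f2]; exact big1.2) (by rw [f1, f3]; exact big2.2)
      rcases this with ⟨h, -⟩ | ⟨h, -⟩ <;> exact absurd h (by decide)
end

section
/- Let Γ be a finite simple labeled graph in which every non-closed full induced path of length greater than 1 has length 2 with both edges labeled 2, and suppose Γ is chordal, every complete induced subgraph on 3 or 4 vertices has at most one edge labeled > 2, and Γ contains no induced subgraph consisting of a 4-cycle labeled 2 with one diagonal labeled m > 2. Then Γ is not poisonous. -/
section Aux

variable {V : Type*} (Γ : LabeledGraph V)

lemma my_adj_ne {u v : V} (h : Γ.Adj u v) : u ≠ v := by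
  rintro rfl; exact Γ.loopless u h

lemma my_label_cases {u v : V} (h : Γ.Adj u v) :
    Γ.label u v = 2 ∨ 2 < Γ.label u v := by
  have := Γ.one_lt_label u v h; omega

/-- An induced path of length 2 has both labels 2. -/
lemma my_path2 (hpaths : Γ.GoodPaths) {a b c : V}
    (hab : Γ.Adj a b) (hbc : Γ.Adj b c) (hac : ¬ Γ.Adj a c) (hne : a ≠ c) :
    Γ.label a b = 2 ∧ Γ.label b c = 2 := by
  have nab := my_adj_ne Γ hab
  have nbc := my_adj_ne Γ hbc
  have hba := Γ.symm a b hab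
  have hcb := Γ.symm b c hbc
  have hca : ¬ Γ.Adj c a := fun h => hac (Γ.symm _ _ h)
  have la := Γ.loopless a
  have lb := Γ.loopless b
  have lc := Γ.loopless c
  have hip : Γ.IsInducedPath (![a, b, c] : Fin 3 → V) := by
    constructor
    · intro i j hij
      fin_cases i <;> fin_cases j <;> simp_all
    · intro i j
      fin_cases i <;> fin_cases j <;> simp_all
  have h := hpaths 2 (by norm_num) _ hip
  exact ⟨h.2 0 1 rfl, h.2 1 2 rfl⟩

/-- No induced path of length 3. -/
lemma my_nopath3 (hpaths : Γ.GoodPaths) {a b c d : V}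
    (hab : Γ.Adj a b) (hbc : Γ.Adj b c) (hcd : Γ.Adj c d)
    (hac : ¬ Γ.Adj a c) (had : ¬ Γ.Adj a d) (hbd : ¬ Γ.Adj b d)
    (nac : a ≠ c) (nad : a ≠ d) (nbd : b ≠ d) : False := by
  have nab := my_adj_ne Γ hab
  have nbc := my_adj_ne Γ hbc
  have ncd := my_adj_ne Γ hcd
  have hba := Γ.symm a b hab
  have hcb := Γ.symm b c hbc
  have hdc := Γ.symm c d hcd
  have hca : ¬ Γ.Adj c a := fun h => hac (Γ.symm _ _ h)
  have hda : ¬ Γ.Adj d a := fun h => had (Γ.symm _ _ h)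
  have hdb : ¬ Γ.Adj d b := fun h => hbd (Γ.symm _ _ h)
  have la := Γ.loopless a
  have lb := Γ.loopless b
  have lc := Γ.loopless c
  have ld := Γ.loopless d
  have hip : Γ.IsInducedPath (![a, b, c, d] : Fin 4 → V) := by
    constructor
    · intro i j hij
      fin_cases i <;> fin_cases j <;> simp_all
    · intro i j
      fin_cases i <;> fin_cases j <;> simp_all
  exact absurd (hpaths 3 (by norm_num) _ hip).1 (by norm_num)

/-- No induced 4-cycle. -/
lemma my_nocycle4 (hchordal : Γ.Chordal) {a b c d : V}
    (hab : Γ.Adj a b) (hbc : Γ.Adj b c) (hcd : Γ.Adj c d) (hda : Γ.Adj d a)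
    (hac : ¬ Γ.Adj a c) (hbd : ¬ Γ.Adj b d)
    (nac : a ≠ c) (nbd : b ≠ d) : False := by
  have nab := my_adj_ne Γ hab
  have nbc := my_adj_ne Γ hbc
  have ncd := my_adj_ne Γ hcd
  have nda := my_adj_ne Γ hda
  have hba := Γ.symm a b hab
  have hcb := Γ.symm b c hbc
  have hdc := Γ.symm c d hcd
  have had := Γ.symm d a hda
  have hca : ¬ Γ.Adj c a := fun h => hac (Γ.symm _ _ h)
  have hdb : ¬ Γ.Adj d b := fun h => hbd (Γ.symm _ _ h)
  have la := Γ.loopless a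
  have lb := Γ.loopless b
  have lc := Γ.loopless c
  have ld := Γ.loopless d
  apply hchordal
  have zeq_0_0 : ((0 : ZMod 4) = 0) = True := by decide
  have zeq_0_1 : ((0 : ZMod 4) = 1) = False := by decide
  have zeq_0_2 : ((0 : ZMod 4) = 2) = False := by decide
  have zeq_0_3 : ((0 : ZMod 4) = 3) = False := by decide
  have zeq_1_0 : ((1 : ZMod 4) = 0) = False := by decide
  have zeq_1_1 : ((1 : ZMod 4) = 1) = True := by decide
  have zeq_1_2 : ((1 : ZMod 4) = 2) = False := by decide
  have zeq_1_3 : ((1 : ZMod 4) = 3) = False := by decide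
  have zeq_2_0 : ((2 : ZMod 4) = 0) = False := by decide
  have zeq_2_1 : ((2 : ZMod 4) = 1) = False := by decide
  have zeq_2_2 : ((2 : ZMod 4) = 2) = True := by decide
  have zeq_2_3 : ((2 : ZMod 4) = 3) = False := by decide
  have zeq_3_0 : ((3 : ZMod 4) = 0) = False := by decide
  have zeq_3_1 : ((3 : ZMod 4) = 1) = False := by decide
  have zeq_3_2 : ((3 : ZMod 4) = 2) = False := by decide
  have zeq_3_3 : ((3 : ZMod 4) = 3) = True := by decide
  have zadd_0 : (0 : ZMod 4) + 1 = 1 := by decide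
  have zadd_1 : (1 : ZMod 4) + 1 = 2 := by decide
  have zadd_2 : (2 : ZMod 4) + 1 = 3 := by decide
  have zadd_3 : (3 : ZMod 4) + 1 = 0 := by decide
  have zcases : ∀ i : ZMod 4, i = 0 ∨ i = 1 ∨ i = 2 ∨ i = 3 := by decide
  refine ⟨4, fun i : ZMod 4 =>
      if i = 0 then a else if i = 1 then b else if i = 2 then c else d,
    le_refl 4, ?_, ?_⟩
  · intro i j hij
    rcases zcases i with rfl | rfl | rfl | rfl <;> rcases zcases j with rfl | rfl | rfl | rfl <;> simp_all [zeq_0_0, zeq_0_1, zeq_0_2, zeq_0_3, zeq_1_0, zeq_1_1, zeq_1_2, zeq_1_3, zeq_2_0, zeq_2_1, zeq_2_2, zeq_2_3, zeq_3_0, zeq_3_1, zeq_3_2, zeq_3_3, zadd_0, zadd_1, zadd_2, zadd_3]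
  · intro i j
    rcases zcases i with rfl | rfl | rfl | rfl <;> rcases zcases j with rfl | rfl | rfl | rfl <;> simp_all [zeq_0_0, zeq_0_1, zeq_0_2, zeq_0_3, zeq_1_0, zeq_1_1, zeq_1_2, zeq_1_3, zeq_2_0, zeq_2_1, zeq_2_2, zeq_2_3, zeq_3_0, zeq_3_1, zeq_3_2, zeq_3_3, zadd_0, zadd_1, zadd_2, zadd_3]

end Aux

section Main

variable {V : Type*} (Γ : LabeledGraph V)

/-- In a triangle, at most one edge is big, so two of the three label-2
conjunctions hold. -/
lemma my_triangle (hcomplete : Γ.Complete34Cond) {a b c : V}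
    (nab : a ≠ b) (nac : a ≠ c) (nbc : b ≠ c)
    (hab : Γ.Adj a b) (hbc : Γ.Adj b c) (hac : Γ.Adj a c) :
    (Γ.Adj2 a b ∧ Γ.Adj2 b c) ∨ (Γ.Adj2 a b ∧ Γ.Adj2 a c) ∨
      (Γ.Adj2 a c ∧ Γ.Adj2 b c) := by
  have hba := Γ.symm a b hab
  have hcb := Γ.symm b c hbc
  have hca := Γ.symm a c hac
  have inj : Function.Injective (![a, b, c] : Fin 3 → V) := by
    intro i j h; fin_cases i <;> fin_cases j <;> simp_all
  have adj : ∀ i j, i ≠ j → Γ.Adj ((![a, b, c] : Fin 3 → V) i) (![a, b, c] j) := by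
    intro i j h; fin_cases i <;> fin_cases j <;> simp_all
  have key := hcomplete 3 (Or.inl rfl) _ inj adj
  rcases my_label_cases Γ hab with e1 | e1 <;>
    rcases my_label_cases Γ hbc with e2 | e2 <;>
      rcases my_label_cases Γ hac with e3 | e3
  · exact Or.inl ⟨⟨hab, e1⟩, ⟨hbc, e2⟩⟩
  · exact Or.inl ⟨⟨hab, e1⟩, ⟨hbc, e2⟩⟩
  · exact Or.inr (Or.inl ⟨⟨hab, e1⟩, ⟨hac, e3⟩⟩)
  · exact absurd (key 1 2 0 2 (by decide) (by decide) e2 e3) (by decide)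
  · exact Or.inr (Or.inr ⟨⟨hac, e3⟩, ⟨hbc, e2⟩⟩)
  · exact absurd (key 0 1 0 2 (by decide) (by decide) e1 e3) (by decide)
  · exact absurd (key 0 1 1 2 (by decide) (by decide) e1 e2) (by decide)
  · exact absurd (key 0 1 1 2 (by decide) (by decide) e1 e2) (by decide)

end Main

theorem stmt_18 (V : Type*) [Finite V] (Γ : LabeledGraph V)
    (hpaths : Γ.GoodPaths) (hchordal : Γ.Chordal)
    (hcomplete : Γ.Complete34Cond) (h4 : ¬ Γ.Poisonous4) :
    ¬ Γ.Poisonous := by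
  rintro (⟨a, b, c, d, nab, nac, nad, nbc, nbd, ncd, ⟨hab, _⟩, ⟨hbc, _⟩,
      ⟨hcd, _⟩, ⟨hda, _⟩, hAC, hBD⟩ |
    ⟨a, b, c, d, nab, nac, nad, nbc, nbd, ncd, ⟨hab, _⟩, ⟨hbc, _⟩, ⟨hcd, _⟩,
      hAC, hAD, hBD⟩ |
    ⟨a, b, c, nab, nac, nbc, hconn, hn1, hn2, hn3⟩ | hp4 | ⟨a, b, c, d, nab,
      nac, nad, nbc, nbd, ncd, ⟨hab, _⟩, ⟨hbc, _⟩, ⟨hcd, _⟩, ⟨hda, _⟩,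
      ⟨hac, hac2⟩, ⟨hbd, hbd2⟩⟩)
  · exact my_nocycle4 Γ hchordal hab hbc hcd hda hAC hBD nac nbd
  · exact my_nopath3 Γ hpaths hab hbc hcd hAC hAD hBD nac nad nbd
  · rcases hconn with ⟨h1, h2⟩ | ⟨h1, h2⟩ | ⟨h1, h2⟩
    · by_cases hA : Γ.Adj a c
      · rcases my_triangle Γ hcomplete nab nac nbc h1 h2 hA with h | h | h
        · exact hn1 h
        · exact hn2 h
        · exact hn3 h
      · obtain ⟨p1, p2⟩ := my_path2 Γ hpaths h1 h2 hA nac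
        exact hn1 ⟨⟨h1, p1⟩, ⟨h2, p2⟩⟩
    · by_cases hA : Γ.Adj b c
      · rcases my_triangle Γ hcomplete nab nac nbc h1 hA h2 with h | h | h
        · exact hn1 h
        · exact hn2 h
        · exact hn3 h
      · obtain ⟨p1, p2⟩ := my_path2 Γ hpaths (Γ.symm a b h1) h2 hA nbc
        exact hn2 ⟨⟨h1, by rw [Γ.label_symm]; exact p1⟩, ⟨h2, p2⟩⟩
    · by_cases hA : Γ.Adj a b
      · rcases my_triangle Γ hcomplete nab nac nbc hA h2 h1 with h | h | h
        · exact hn1 h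
        · exact hn2 h
        · exact hn3 h
      · obtain ⟨p1, p2⟩ := my_path2 Γ hpaths h1 (Γ.symm b c h2) hA nab
        exact hn3 ⟨⟨h1, p1⟩, ⟨h2, by rw [Γ.label_symm]; exact p2⟩⟩
  · exact h4 hp4
  · have hba := Γ.symm a b hab
    have hcb := Γ.symm b c hbc
    have hdc := Γ.symm c d hcd
    have had := Γ.symm d a hda
    have hca := Γ.symm a c hac
    have hdb := Γ.symm b d hbd
    have inj : Function.Injective (![a, b, c, d] : Fin 4 → V) := by
      intro i j h; fin_cases i <;> fin_cases j <;> simp_all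
    have adj : ∀ i j, i ≠ j →
        Γ.Adj ((![a, b, c, d] : Fin 4 → V) i) (![a, b, c, d] j) := by
      intro i j h; fin_cases i <;> fin_cases j <;> simp_all
    exact absurd (hcomplete 4 (Or.inr rfl) _ inj adj 0 2 1 3 (by decide)
      (by decide) hac2 hbd2) (by decide)
end

section
/- Let Γ be a finite simple labeled graph that is not complete-with-all-edges-labeled-2, so there exist vertices u, v not joined by an edge labeled 2. Form Γ₁ by adding two new vertices w₁, w₂ joined to each other by an edge labeled 3 and each joined by edges labeled 2 to every vertex of Γ. Then Γ₁ is poisonous. -/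
/-- The graph `Γ₁` obtained from `Γ` by adding two new vertices `w₁, w₂`
joined to each other by an edge labeled 3, each joined by edges labeled 2 to
every vertex of `Γ`. -/
def LabeledGraph.addCentralPair {V : Type*} (Γ : LabeledGraph V) :
    LabeledGraph (V ⊕ Fin 2) where
  Adj u v := match u, v with
    | .inl a, .inl b => Γ.Adj a b
    | .inl _, .inr _ => True
    | .inr _, .inl _ => True
    | .inr i, .inr j => i ≠ j
  label u v := match u, v with
    | .inl a, .inl b => Γ.label a b
    | .inl _, .inr _ => 2
    | .inr _, .inl _ => 2
    | .inr _, .inr _ => 3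
  symm := by
    rintro (a|a) (b|b) h <;> simp_all
    · exact Γ.symm _ _ h
    · exact fun e => h e.symm
  loopless := by
    rintro (a|a) h <;> simp_all
    exact Γ.loopless _ h
  label_symm := by
    rintro (a|a) (b|b) <;> simp
    exact Γ.label_symm _ _
  one_lt_label := by
    rintro (a|a) (b|b) h <;> simp_all
    exact Γ.one_lt_label _ _ h

theorem stmt_19 (V : Type*) [Finite V] (Γ : LabeledGraph V)
    (h : ∃ u v : V, u ≠ v ∧ ¬ Γ.Adj2 u v) :
    Γ.addCentralPair.Poisonous := by
  obtain ⟨u, v, huv, hn⟩ := h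
  by_cases hadj : Γ.Adj u v
  · -- label > 2, use Poisonous5
    have hlab : 2 < Γ.label u v := by
      have h1 := Γ.one_lt_label u v hadj
      rcases Nat.lt_or_ge 2 (Γ.label u v) with h2 | h2
      · exact h2
      · exact absurd ⟨hadj, le_antisymm h2 h1⟩ hn
    refine Or.inr (Or.inr (Or.inr (Or.inr
      ⟨.inr 0, .inl u, .inr 1, .inl v, by simp, by simp [Fin.ext_iff], by simp,
        by simp, by simp [huv], by simp, ?_, ?_, ?_, ?_, ?_, ?_⟩)))
    all_goals
      simp [LabeledGraph.Adj2, LabeledGraph.AdjBig, LabeledGraph.addCentralPair, hadj, hlab,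
        Fin.ext_iff]
  · -- use Poisonous4
    refine Or.inr (Or.inr (Or.inr (Or.inl
      ⟨.inr 0, .inl u, .inr 1, .inl v, by simp, by simp [Fin.ext_iff], by simp,
        by simp, by simp [huv], by simp, ?_, ?_, ?_, ?_, ?_, ?_⟩)))
    all_goals
      simp [LabeledGraph.Adj2, LabeledGraph.AdjBig, LabeledGraph.addCentralPair, hadj,
        Fin.ext_iff]
end
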